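/- arXiv:1307.2429 — 5 statements merged into one kernel-verified Lean document; each statement's English description precedes it below -/
import Mathlib

section
/- Let ν₁ > 0 and for each ν ≥ ν₁ let M_ν be a bounded linear operator on L²_ν(ℝ;H) such that limsup_{ν→∞} ‖M_ν‖_{L(L²_ν)} < ∞. Let D be a linear subspace consisting of measurable functions f : ℝ → H that belong to L²_ν(ℝ;H) for every ν ≥ ν₁, such that: (a) for every a ∈ ℝ and every ν ≥ ν₁ the set {f ∈ D : 𝟙_{≤a} f ∈ D} is dense in L²_ν(ℝ;H); (b) for all f ∈ D and all ν, ν' ≥ ν₁, the functions M_ν f and M_{ν'} f coincide almost everywhere. Then for every ν ≥ ν₁ the operator M_ν is causal on L²_ν(ℝ;H), i.e., for every a ∈ ℝ and f ∈ L²_ν(ℝ;H) with 𝟙_{≤a} f = 0 one has 𝟙_{≤a}(M_ν f) = 0. -/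
open MeasureTheory Filter
open scoped ENNReal NNReal

/-- The exponentially weighted measure `exp(-2νt) dt` on `ℝ`. -/
noncomputable def wMeasure (ν : ℝ) : Measure ℝ :=
  volume.withDensity fun t => ENNReal.ofReal (Real.exp (-2 * ν * t))

/-- Multiplication by the indicator function of `(-∞, a]` on `L²_ν(ℝ; H)`. -/
noncomputable def trunc {H : Type*} [NormedAddCommGroup H] (ν a : ℝ)
    (f : Lp H 2 (wMeasure ν)) : Lp H 2 (wMeasure ν) :=
  MemLp.toLp (Set.indicator (Set.Iic a) f) ((Lp.memLp f).indicator measurableSet_Iic)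

/-!
By linearity, continuity of truncation and density, causality reduces to a support statement:
`M_ν h` vanishes on `(-∞, a]` whenever `h ∈ D` does. For such `h` and `b < a`, the mass of
`M_ν h` on `(-∞, b]` equals that of `M_{ν'} h`; passing to `L²_{ν'}` costs the weight factor
`exp (2 (ν' - ν) b)`, while the support of `h` in `(a, ∞)` gains `exp (-2 (ν' - ν) a)`. With
`‖M_{ν'}‖` eventually bounded, the mass is `O(exp (2 (ν' - ν) (b - a)))`, which tends to `0` as
`ν' → ∞`.
-/

open Set
open scoped Topology

instance (ν : ℝ) : NullSingletonClass (wMeasure ν) := by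
  unfold wMeasure; infer_instance

lemma wMeasure_absolutelyContinuous (ν : ℝ) : wMeasure ν ≪ volume :=
  withDensity_absolutelyContinuous _ _

lemma lintegral_wMeasure (ν : ℝ) (F : ℝ → ℝ≥0∞) :
    ∫⁻ t, F t ∂wMeasure ν = ∫⁻ t, ENNReal.ofReal (Real.exp (-2 * ν * t)) * F t := by
  rw [wMeasure, lintegral_withDensity_eq_lintegral_mul_non_measurable _
    (by fun_prop) (Eventually.of_forall fun _ => ENNReal.ofReal_lt_top)]
  rfl

lemma lintegral_wMeasure_le {ν ν' : ℝ} {c : ℝ≥0∞} (hc : c ≠ ∞) {F : ℝ → ℝ≥0∞}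
    (hF : ∀ t, ENNReal.ofReal (Real.exp (-2 * ν * t)) * F t ≤
      c * (ENNReal.ofReal (Real.exp (-2 * ν' * t)) * F t)) :
    ∫⁻ t, F t ∂wMeasure ν ≤ c * ∫⁻ t, F t ∂wMeasure ν' := by
  rw [lintegral_wMeasure, lintegral_wMeasure, ← lintegral_const_mul' _ _ hc]
  exact lintegral_mono hF

lemma ofReal_exp_mul_le_of_le_add {x y z : ℝ} (h : x ≤ y + z) (F : ℝ≥0∞) :
    ENNReal.ofReal (Real.exp x) * F ≤
      ENNReal.ofReal (Real.exp y) * (ENNReal.ofReal (Real.exp z) * F) := by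
  rw [← mul_assoc, ← ENNReal.ofReal_mul (Real.exp_pos _).le, ← Real.exp_add]
  gcongr

lemma setLIntegral_Iic_wMeasure_le {ν ν' : ℝ} (hνν' : ν ≤ ν') (b : ℝ) (F : ℝ → ℝ≥0∞) :
    ∫⁻ t in Iic b, F t ∂wMeasure ν ≤
      ENNReal.ofReal (Real.exp (2 * (ν' - ν) * b)) * ∫⁻ t, F t ∂wMeasure ν' := by
  rw [← lintegral_indicator measurableSet_Iic]
  refine (lintegral_wMeasure_le ENNReal.ofReal_ne_top fun t => ?_).trans
    (mul_le_mul_right (lintegral_mono (indicator_le_self _ F)) _)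
  by_cases htb : t ∈ Iic b
  · rw [indicator_of_mem htb]
    exact ofReal_exp_mul_le_of_le_add (by nlinarith [mem_Iic.1 htb]) _
  · simp [indicator_of_notMem htb]

lemma lintegral_wMeasure_le_of_eq_zero_on_Iic {ν ν' a : ℝ} (hνν' : ν ≤ ν') {F : ℝ → ℝ≥0∞}
    (hF : ∀ t ≤ a, F t = 0) :
    ∫⁻ t, F t ∂wMeasure ν' ≤
      ENNReal.ofReal (Real.exp (-2 * (ν' - ν) * a)) * ∫⁻ t, F t ∂wMeasure ν := by
  refine lintegral_wMeasure_le ENNReal.ofReal_ne_top fun t => ?_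
  rcases le_or_gt t a with hta | hta
  · simp [hF t hta]
  · exact ofReal_exp_mul_le_of_le_add (by nlinarith) _

section Lp

variable {α E F 𝕜 : Type*} {m : MeasurableSpace α} {μ : Measure α}

lemma eLpNorm_two_rpow_two [NormedAddCommGroup E] (f : α → E) :
    eLpNorm f 2 μ ^ (2 : ℝ) = ∫⁻ x, ‖f x‖ₑ ^ (2 : ℝ) ∂μ := by
  simpa using eLpNorm_nnreal_pow_eq_lintegral (μ := μ) (f := f) (p := 2) two_ne_zero

lemma lintegral_enorm_rpow_two_apply_toLp_le [NontriviallyNormedField 𝕜]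
    [NormedAddCommGroup E] [NormedSpace 𝕜 E] [NormedAddCommGroup F] [NormedSpace 𝕜 F]
    (T : Lp E 2 μ →L[𝕜] Lp F 2 μ) {f : α → E} (hf : MemLp f 2 μ) :
    ∫⁻ x, ‖T (hf.toLp f) x‖ₑ ^ (2 : ℝ) ∂μ ≤ ‖T‖ₑ ^ (2 : ℝ) * ∫⁻ x, ‖f x‖ₑ ^ (2 : ℝ) ∂μ := by
  rw [← eLpNorm_two_rpow_two, ← eLpNorm_two_rpow_two, ← Lp.enorm_def, ← Lp.enorm_toLp hf,
    ← ENNReal.mul_rpow_of_nonneg _ _ zero_le_two]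
  gcongr
  exact T.le_opENorm _

end Lp

lemma ae_le_imp_of_forall_lt {μ : Measure ℝ} [NullSingletonClass μ] {p : ℝ → Prop} {a : ℝ}
    (h : ∀ b < a, ∀ᵐ t ∂μ, t ≤ b → p t) : ∀ᵐ t ∂μ, t ≤ a → p t := by
  have hrat : ∀ q : ℚ, ∀ᵐ t ∂μ, (q : ℝ) < a → t ≤ (q : ℝ) → p t := fun q => by
    by_cases hq : (q : ℝ) < a
    · filter_upwards [h q hq] with t ht using fun _ => ht
    · exact Eventually.of_forall fun _ hq' => absurd hq' hq
  filter_upwards [ae_all_iff.2 hrat, measure_eq_zero_iff_ae_notMem.1 (measure_singleton (μ := μ) a)]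
    with t ht hta hle
  obtain ⟨q, htq, hqa⟩ := exists_rat_btwn (lt_of_le_of_ne hle hta)
  exact ht q hqa htq.le

section Trunc

variable {H : Type*} [NormedAddCommGroup H] {ν a : ℝ}

lemma trunc_eq_zero_iff {f : Lp H 2 (wMeasure ν)} :
    trunc ν a f = 0 ↔ ∀ᵐ t ∂wMeasure ν, t ≤ a → f t = 0 := by
  rw [Lp.eq_zero_iff_ae_eq_zero, trunc]
  refine (MemLp.coeFn_toLp _).congr_left.trans ?_
  simp only [EventuallyEq, Pi.zero_apply, indicator_apply_eq_zero, mem_Iic]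

lemma trunc_toLp {f : ℝ → H} (hf : MemLp f 2 (wMeasure ν)) :
    trunc ν a (hf.toLp f) = (hf.indicator measurableSet_Iic).toLp (indicator (Iic a) f) :=
  MemLp.toLp_congr _ _ (MemLp.coeFn_toLp hf).indicator

lemma trunc_sub (f g : Lp H 2 (wMeasure ν)) :
    trunc ν a (f - g) = trunc ν a f - trunc ν a g := by
  rw [trunc, trunc, trunc, ← MemLp.toLp_sub]
  refine MemLp.toLp_congr _ _ ?_
  filter_upwards [Lp.coeFn_sub f g] with t ht
  simp only [indicator_apply, mem_Iic, ht, Pi.sub_apply]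
  split_ifs <;> simp

lemma lipschitzWith_trunc : LipschitzWith 1 (trunc (H := H) ν a) := by
  refine LipschitzWith.of_dist_le_mul fun f g => ?_
  rw [dist_eq_norm, dist_eq_norm, ← trunc_sub, NNReal.coe_one, one_mul, Lp.norm_def,
    Lp.norm_def, trunc, eLpNorm_congr_ae (MemLp.coeFn_toLp _)]
  exact ENNReal.toReal_mono (Lp.eLpNorm_ne_top _) (eLpNorm_indicator_le _)

end Trunc

section Causality

variable {𝕜 H : Type*} [NontriviallyNormedField 𝕜] [NormedAddCommGroup H] [NormedSpace 𝕜 H]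

lemma trunc_apply_eq_zero_of_dense {ν a : ℝ} {T : Lp H 2 (wMeasure ν) →L[𝕜] Lp H 2 (wMeasure ν)}
    {S : Set (Lp H 2 (wMeasure ν))} (hS : Dense S)
    (hT : ∀ g ∈ S, trunc ν a (T (g - trunc ν a g)) = 0) {f : Lp H 2 (wMeasure ν)}
    (hf : trunc ν a f = 0) : trunc ν a (T f) = 0 := by
  have hcont : Continuous fun g => trunc ν a (T (g - trunc ν a g)) :=
    lipschitzWith_trunc.continuous.comp
      (T.continuous.comp (continuous_id.sub lipschitzWith_trunc.continuous))
  simpa [hf] using congrFun (hcont.ext_on hS continuous_const hT) f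

lemma tendsto_ofReal_exp_mul_sub_atTop {c : ℝ} (hc : c < 0) (ν : ℝ) :
    Tendsto (fun ν' => ENNReal.ofReal (Real.exp (c * (ν' - ν)))) atTop (𝓝 0) := by
  have h := (tendsto_atTop_add_const_right atTop (-ν) tendsto_id).const_mul_atTop_of_neg hc
  simpa [← sub_eq_add_neg] using
    ENNReal.tendsto_ofReal (Real.tendsto_exp_atBot.comp h)

lemma setLIntegral_Iic_enorm_apply_toLp_le {ν ν' a : ℝ} (hνν' : ν ≤ ν')
    (T : Lp H 2 (wMeasure ν') →L[𝕜] Lp H 2 (wMeasure ν')) {h : ℝ → H}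
    (hh : MemLp h 2 (wMeasure ν')) (hsupp : ∀ t ≤ a, h t = 0) (b : ℝ) :
    ∫⁻ t in Iic b, ‖T (hh.toLp h) t‖ₑ ^ (2 : ℝ) ∂wMeasure ν ≤
      ‖T‖ₑ ^ (2 : ℝ) * (∫⁻ t, ‖h t‖ₑ ^ (2 : ℝ) ∂wMeasure ν) *
        ENNReal.ofReal (Real.exp (2 * (b - a) * (ν' - ν))) :=
  calc ∫⁻ t in Iic b, ‖T (hh.toLp h) t‖ₑ ^ (2 : ℝ) ∂wMeasure ν
      ≤ ENNReal.ofReal (Real.exp (2 * (ν' - ν) * b)) *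
          ∫⁻ t, ‖T (hh.toLp h) t‖ₑ ^ (2 : ℝ) ∂wMeasure ν' :=
        setLIntegral_Iic_wMeasure_le hνν' b _
    _ ≤ ENNReal.ofReal (Real.exp (2 * (ν' - ν) * b)) * (‖T‖ₑ ^ (2 : ℝ) *
          (ENNReal.ofReal (Real.exp (-2 * (ν' - ν) * a)) * ∫⁻ t, ‖h t‖ₑ ^ (2 : ℝ) ∂wMeasure ν)) := by
        gcongr
        refine (lintegral_enorm_rpow_two_apply_toLp_le T hh).trans ?_
        gcongr
        exact lintegral_wMeasure_le_of_eq_zero_on_Iic hνν' fun t ht => by simp [hsupp t ht]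
    _ = _ := by
        rw [show 2 * (b - a) * (ν' - ν) = 2 * (ν' - ν) * b + -2 * (ν' - ν) * a by ring,
          Real.exp_add, ENNReal.ofReal_mul (Real.exp_pos _).le]
        ring

theorem trunc_apply_toLp_eq_zero_of_eq_zero_on_Iic
    {M : (ν : ℝ) → Lp H 2 (wMeasure ν) →L[𝕜] Lp H 2 (wMeasure ν)} {C : ℝ≥0∞} (hC : C ≠ ∞)
    (hMC : ∀ᶠ ν in atTop, ‖M ν‖ₑ ≤ C) {ν₁ a : ℝ} {h : ℝ → H}
    (hh : ∀ ν, ν₁ ≤ ν → MemLp h 2 (wMeasure ν))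
    (hcoh : ∀ ν ν' (hν : ν₁ ≤ ν) (hν' : ν₁ ≤ ν'),
      ⇑(M ν ((hh ν hν).toLp h)) =ᵐ[volume] ⇑(M ν' ((hh ν' hν').toLp h)))
    (hsupp : ∀ t ≤ a, h t = 0) (ν : ℝ) (hν : ν₁ ≤ ν) :
    trunc ν a (M ν ((hh ν hν).toLp h)) = 0 := by
  set u := M ν ((hh ν hν).toLp h)
  set K := ∫⁻ t, ‖h t‖ₑ ^ (2 : ℝ) ∂wMeasure ν with hK_def
  have hK : K ≠ ∞ := by
    rw [hK_def, ← eLpNorm_two_rpow_two]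
    exact ENNReal.rpow_ne_top_of_nonneg zero_le_two (hh ν hν).eLpNorm_ne_top
  have hmass (b : ℝ) (hb : b < a) : ∫⁻ t in Iic b, ‖u t‖ₑ ^ (2 : ℝ) ∂wMeasure ν = 0 := by
    have hdecay : Tendsto (fun ν' => C ^ (2 : ℝ) * K *
        ENNReal.ofReal (Real.exp (2 * (b - a) * (ν' - ν)))) atTop (𝓝 0) := by
      simpa using ENNReal.Tendsto.const_mul
        (tendsto_ofReal_exp_mul_sub_atTop (by linarith : 2 * (b - a) < 0) ν) (.inr (by finiteness))
    refine le_antisymm (ge_of_tendsto hdecay ?_) zero_le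
    filter_upwards [hMC, eventually_ge_atTop ν₁, eventually_ge_atTop ν] with ν' hC' hν₁ν' hνν'
    calc ∫⁻ t in Iic b, ‖u t‖ₑ ^ (2 : ℝ) ∂wMeasure ν
        = ∫⁻ t in Iic b, ‖M ν' ((hh ν' hν₁ν').toLp h) t‖ₑ ^ (2 : ℝ) ∂wMeasure ν :=
          lintegral_congr_ae <| ae_restrict_of_ae <|
            ((wMeasure_absolutelyContinuous ν).ae_eq (hcoh ν ν' hν hν₁ν')).mono
              fun _ ht => congrArg (‖·‖ₑ ^ (2 : ℝ)) ht
      _ ≤ _ := setLIntegral_Iic_enorm_apply_toLp_le hνν' _ _ hsupp b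
      _ ≤ _ := by gcongr
  have hvanish (b : ℝ) (hb : b < a) : ∀ᵐ t ∂wMeasure ν, t ≤ b → u t = 0 := by
    have hmeas : AEMeasurable (fun t => ‖u t‖ₑ ^ (2 : ℝ)) ((wMeasure ν).restrict (Iic b)) :=
      ((Lp.aestronglyMeasurable u).enorm.pow_const _).restrict
    filter_upwards [(ae_restrict_iff' measurableSet_Iic).1
      ((lintegral_eq_zero_iff' hmeas).1 (hmass b hb))] with t ht htb
    simpa using ht htb
  exact trunc_eq_zero_iff.2 (ae_le_imp_of_forall_lt hvanish)

end Causality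

theorem stmt1_general
    {H : Type*} [NormedAddCommGroup H] [InnerProductSpace ℂ H]
    (ν₁ : ℝ)
    (M : (ν : ℝ) → Lp H 2 (wMeasure ν) →L[ℂ] Lp H 2 (wMeasure ν))
    (hbdd : Filter.limsup (fun ν : ℝ => (‖M ν‖₊ : ℝ≥0∞)) Filter.atTop < ⊤)
    (D : Submodule ℂ (ℝ → H))
    (hD : ∀ f ∈ D, ∀ ν : ℝ, ν₁ ≤ ν → MemLp f 2 (wMeasure ν))
    (hdense : ∀ (a : ℝ) (ν : ℝ) (hν : ν₁ ≤ ν),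
      Dense {g : Lp H 2 (wMeasure ν) | ∃ (f : ℝ → H) (hf : f ∈ D),
        Set.indicator (Set.Iic a) f ∈ D ∧ g = MemLp.toLp f (hD f hf ν hν)})
    (hcoh : ∀ (f : ℝ → H) (hf : f ∈ D) (ν ν' : ℝ) (hν : ν₁ ≤ ν) (hν' : ν₁ ≤ ν'),
      ⇑(M ν (MemLp.toLp f (hD f hf ν hν))) =ᵐ[volume]
        ⇑(M ν' (MemLp.toLp f (hD f hf ν' hν')))) :
    ∀ (ν : ℝ), ν₁ ≤ ν → ∀ (a : ℝ) (f : Lp H 2 (wMeasure ν)),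
      trunc ν a f = 0 → trunc ν a (M ν f) = 0 := by
  intro ν hν a f
  obtain ⟨C, hlt, hC⟩ := exists_between hbdd
  have hMC : ∀ᶠ ν in atTop, ‖M ν‖ₑ ≤ C := (eventually_lt_of_limsup_lt hlt).mono fun _ h => h.le
  refine trunc_apply_eq_zero_of_dense (hdense a ν hν) ?_
  rintro _ ⟨g, hg, hga, rfl⟩
  have hgD : g - indicator (Iic a) g ∈ D := D.sub_mem hg hga
  rw [trunc_toLp, ← MemLp.toLp_sub]
  exact trunc_apply_toLp_eq_zero_of_eq_zero_on_Iic hC.ne hMC (fun ν hν => hD _ hgD ν hν)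
    (fun ν ν' hν hν' => hcoh _ hgD ν ν' hν hν') (fun t ht => by simp [ht]) ν hν

/-- A bounded evolutionary mapping, i.e. a family of bounded operators
`M_ν` on `L²_ν(ℝ;H)` with uniformly bounded norms that agree on a common dense domain `D`
whose truncated elements are dense, is causal on every `L²_ν(ℝ;H)`, `ν ≥ ν₁`. -/
theorem stmt1
    {H : Type*} [NormedAddCommGroup H] [InnerProductSpace ℂ H] [CompleteSpace H]
    (ν₁ : ℝ) (hν₁ : 0 < ν₁)
    (M : (ν : ℝ) → Lp H 2 (wMeasure ν) →L[ℂ] Lp H 2 (wMeasure ν))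
    (hbdd : Filter.limsup (fun ν : ℝ => (‖M ν‖₊ : ℝ≥0∞)) Filter.atTop < ⊤)
    (D : Submodule ℂ (ℝ → H))
    (hD : ∀ f ∈ D, ∀ ν : ℝ, ν₁ ≤ ν → MemLp f 2 (wMeasure ν))
    (hdense : ∀ (a : ℝ) (ν : ℝ) (hν : ν₁ ≤ ν),
      Dense {g : Lp H 2 (wMeasure ν) | ∃ (f : ℝ → H) (hf : f ∈ D),
        Set.indicator (Set.Iic a) f ∈ D ∧ g = MemLp.toLp f (hD f hf ν hν)})
    (hcoh : ∀ (f : ℝ → H) (hf : f ∈ D) (ν ν' : ℝ) (hν : ν₁ ≤ ν) (hν' : ν₁ ≤ ν'),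
      ⇑(M ν (MemLp.toLp f (hD f hf ν hν))) =ᵐ[volume]
        ⇑(M ν' (MemLp.toLp f (hD f hf ν' hν')))) :
    ∀ (ν : ℝ), ν₁ ≤ ν → ∀ (a : ℝ) (f : Lp H 2 (wMeasure ν)),
      trunc ν a f = 0 → trunc ν a (M ν f) = 0 :=
  stmt1_general ν₁ M hbdd D hD hdense hcoh
end

section
/- Let (P_a)_{a∈ℝ} be a family of self-adjoint idempotent bounded linear operators on K with P_a x → x as a → ∞ for every x ∈ K, and assume 𝓜 and 𝓝 are causal with respect to this family, i.e., P_a 𝓜 u = P_a 𝓜 (P_a u) and P_a 𝓝 u = P_a 𝓝 (P_a u) for all a ∈ ℝ, u ∈ K. Assume there is c > 0 such that: (i) Re⟨B₀φ, P_aφ⟩ ≥ c‖P_aφ‖² for all a ∈ ℝ and all φ ∈ dom(D₀) ∩ dom(A); (ii) Re⟨𝓜*(D₀*ψ) + 𝓝*ψ + A*ψ, ψ⟩ ≥ c‖ψ‖² for all ψ ∈ dom(D₀*) ∩ dom(A*). Then B₀ is closable, its closure B maps dom(B) bijectively onto K with ‖B⁻¹f‖ ≤ (1/c)‖f‖ for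 all f ∈ K, and B⁻¹ is causal with respect to (P_a): for every a ∈ ℝ and f ∈ K with P_a f = 0 one has P_a(B⁻¹ f) = 0. -/
/-!
If `ψ ⊥ ran B₀`, the regularised vectors `ψ_ε = R_ε^* ψ` lie in the domain of the formal adjoint
`B₀^♯ = 𝓜^* D₀^* + 𝓝^* + A^*`: testing `ψ` against `B₀ (R_ε x)` computes `A^* ψ_ε`, and the
commutator `R_ε 𝓜 - 𝓜 R_ε = ε R_ε M R_ε` leaves
`B₀^♯ ψ_ε = R_ε^* M^* (ψ - ψ_ε) + (𝓝^* ψ_ε - R_ε^* 𝓝^* ψ)`, which tends to `0`. Coercivity (ii)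
of `B₀^♯` then gives `c ‖ψ‖² ≤ 0`, so `ran B₀` is dense. Since `dom B₀^♯ ⊇ R_ε^* (dom A^*)` is
dense, `B₀ ⊆ (B₀^♯)^*` is closable.

Coercivity (i) is a closed condition on the graph, so it passes to the closure `B`; letting
`a → ∞` gives `c ‖u‖ ≤ ‖B u‖`, hence `B` is injective with closed and dense, i.e. full, range.
For fixed `a`, `P_a B u = 0` makes `⟨B u, P_a u⟩ = ⟨P_a B u, u⟩ = 0`, hence `P_a u = 0`.
-/

open Filter

/-- The operator `B₀` with domain `dom D₀ ⊓ dom A`, `B₀ u = D₀(𝓜 u) + 𝓝 u + A u`. -/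
noncomputable def B0 {K : Type*} [NormedAddCommGroup K] [InnerProductSpace ℂ K]
    (D₀ A : K →ₗ.[ℂ] K) (Mc N : K →L[ℂ] K)
    (hM : ∀ u ∈ D₀.domain, Mc u ∈ D₀.domain) : K →ₗ.[ℂ] K where
  domain := D₀.domain ⊓ A.domain
  toFun :=
    D₀.toFun.comp (LinearMap.codRestrict D₀.domain
        ((Mc : K →ₗ[ℂ] K).comp (D₀.domain ⊓ A.domain).subtype)
        (fun u => hM _ (Submodule.mem_inf.mp u.2).1))
    + (N : K →ₗ[ℂ] K).comp (D₀.domain ⊓ A.domain).subtype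
    + A.toFun.comp (Submodule.inclusion inf_le_right)

open Topology
open scoped InnerProductSpace

theorem eq_zero_of_mul_norm_sq_le_zero {E : Type*} [NormedAddCommGroup E] {c : ℝ} (hc : 0 < c)
    {x : E} (h : c * ‖x‖ ^ 2 ≤ 0) : x = 0 := by
  simpa using nonpos_of_mul_nonpos_right h hc

theorem tendsto_apply_zero_of_norm_le {𝕜 E F : Type*} [NontriviallyNormedField 𝕜]
    [NormedAddCommGroup E] [NormedSpace 𝕜 E] [NormedAddCommGroup F] [NormedSpace 𝕜 F]
    {ι : Type*} {l : Filter ι} {T : ι → E →L[𝕜] F} {C : ℝ} (hC : ∀ᶠ i in l, ‖T i‖ ≤ C)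
    {x : ι → E} (hx : Tendsto x l (𝓝 0)) : Tendsto (fun i => T i (x i)) l (𝓝 0) := by
  refine squeeze_zero_norm' ?_ (by simpa using hx.norm.const_mul C)
  filter_upwards [hC] with i hi
  exact (T i).le_of_opNorm_le hi _

section Inner

variable {𝕜 E : Type*} [RCLike 𝕜] [NormedAddCommGroup E] [InnerProductSpace 𝕜 E]

theorem mul_norm_le_of_mul_norm_sq_le_re_inner {c : ℝ} {x y : E}
    (h : c * ‖x‖ ^ 2 ≤ RCLike.re ⟪y, x⟫_𝕜) : c * ‖x‖ ≤ ‖y‖ := by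
  rcases (norm_nonneg x).eq_or_lt with hx | hx
  · rw [← hx, mul_zero]; exact norm_nonneg y
  · have : c * ‖x‖ * ‖x‖ ≤ ‖y‖ * ‖x‖ := by
      calc c * ‖x‖ * ‖x‖ = c * ‖x‖ ^ 2 := by ring
        _ ≤ RCLike.re ⟪y, x⟫_𝕜 := h
        _ ≤ ‖y‖ * ‖x‖ := (RCLike.re_le_norm _).trans (norm_inner_le_norm y x)
    exact le_of_mul_le_mul_right this hx

theorem mul_norm_sq_le_re_inner_of_tendsto {ι : Type*} {l : Filter ι} [l.NeBot] {c : ℝ}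
    {x y : ι → E} {x₀ y₀ : E} (hx : Tendsto x l (𝓝 x₀)) (hy : Tendsto y l (𝓝 y₀))
    (h : ∀ᶠ i in l, c * ‖x i‖ ^ 2 ≤ RCLike.re ⟪y i, x i⟫_𝕜) :
    c * ‖x₀‖ ^ 2 ≤ RCLike.re ⟪y₀, x₀⟫_𝕜 :=
  le_of_tendsto_of_tendsto ((hx.norm.pow 2).const_mul c)
    ((RCLike.continuous_re.tendsto _).comp (hy.inner hx)) h

end Inner

namespace LinearPMap

section Normed

variable {𝕜 E F : Type*} [NontriviallyNormedField 𝕜] [NormedAddCommGroup E] [NormedSpace 𝕜 E]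
  [NormedAddCommGroup F] [NormedSpace 𝕜 F] {T : E →ₗ.[𝕜] F}

theorem IsClosable.closure_apply_mem (hT : T.IsClosable) {C : Set (E × F)}
    (hC : _root_.IsClosed C) (h : ∀ x : T.domain, ((x : E), T x) ∈ C) (x : T.closure.domain) :
    ((x : E), T.closure x) ∈ C := by
  have hgraph : (T.graph : Set (E × F)) ⊆ C := by
    rintro ⟨_, _⟩ hp
    obtain ⟨y, rfl, rfl⟩ := T.mem_graph_iff.mp hp
    exact h y
  have hx : ((x : E), T.closure x) ∈ _root_.closure (T.graph : Set (E × F)) := by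
    rw [← Submodule.topologicalClosure_coe, hT.graph_closure_eq_closure_graph]
    exact T.closure.mem_graph x
  exact closure_minimal hgraph hC hx

theorem injective_of_norm_le {C : ℝ} (h : ∀ x : T.domain, ‖(x : E)‖ ≤ C * ‖T x‖) :
    Function.Injective T := by
  intro x y hxy
  have hxy' := h (x - y)
  rw [map_sub, hxy, sub_self, norm_zero, mul_zero, norm_le_zero_iff, Submodule.coe_sub,
    sub_eq_zero] at hxy'
  exact Subtype.ext hxy'

theorem IsClosed.isClosed_range_of_norm_le [CompleteSpace E] [CompleteSpace F] (hT : T.IsClosed)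
    {C : ℝ} (h : ∀ x : T.domain, ‖(x : E)‖ ≤ C * ‖T x‖) : _root_.IsClosed (Set.range T) := by
  have : CompleteSpace T.graph := hT.completeSpace_coe
  let π : T.graph →L[𝕜] F := (ContinuousLinearMap.snd 𝕜 E F).comp T.graph.subtypeL
  have hπ : AntilipschitzWith (max C.toNNReal 1) π := by
    refine π.antilipschitz_of_bound fun p => ?_
    obtain ⟨x, hx, hTx⟩ := T.mem_graph_iff.mp p.2
    have hC : ‖(p : E × F).1‖ ≤ max C.toNNReal 1 * ‖(p : E × F).2‖ := by
      rw [← hx, ← hTx]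
      exact (h x).trans (mul_le_mul_of_nonneg_right
        ((C.le_coe_toNNReal).trans (by exact_mod_cast le_max_left _ _)) (norm_nonneg _))
    have hone : ‖(p : E × F).2‖ ≤ max C.toNNReal 1 * ‖(p : E × F).2‖ :=
      le_mul_of_one_le_left (norm_nonneg _) (by exact_mod_cast le_max_right _ _)
    simpa [π, Prod.norm_def] using And.intro hC hone
  have hrange : Set.range π = Set.range T := by
    ext y
    constructor
    · rintro ⟨p, rfl⟩
      obtain ⟨x, -, hTx⟩ := T.mem_graph_iff.mp p.2
      exact ⟨x, hTx⟩
    · rintro ⟨x, rfl⟩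
      exact ⟨⟨_, T.mem_graph x⟩, rfl⟩
  exact hrange ▸ hπ.isClosed_range π.uniformContinuous

theorem IsClosed.bijective_of_norm_le [CompleteSpace E] [CompleteSpace F] (hT : T.IsClosed) {C : ℝ}
    (h : ∀ x : T.domain, ‖(x : E)‖ ≤ C * ‖T x‖) (hdense : DenseRange T) :
    Function.Bijective T := by
  refine ⟨injective_of_norm_le h, Set.range_eq_univ.mp ?_⟩
  rw [← (hT.isClosed_range_of_norm_le h).closure_eq, hdense.closure_range]

end Normed

section Inner

variable {𝕜 E F : Type*} [RCLike 𝕜] [NormedAddCommGroup E] [InnerProductSpace 𝕜 E]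
  [NormedAddCommGroup F] [InnerProductSpace 𝕜 F] {T : E →ₗ.[𝕜] F}

theorem isClosable_of_isFormalAdjoint [CompleteSpace F] {S : F →ₗ.[𝕜] E}
    (hS : Dense (S.domain : Set F)) (h : S.IsFormalAdjoint T) : T.IsClosable :=
  (adjoint_isClosed hS).isClosable.leIsClosable (h.le_adjoint hS)

theorem adjoint_apply_mem_adjoint_domain [CompleteSpace E] {T : E →ₗ.[𝕜] E}
    (hT : Dense (T.domain : Set E)) (R : E →L[𝕜] E) (hR : ∀ u ∈ T.domain, R u ∈ T.domain)
    (hRT : ∀ u : T.domain, T ⟨R u, hR u u.2⟩ = R (T u)) (ψ : T†.domain) :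
    ContinuousLinearMap.adjoint R ψ ∈ T†.domain := by
  refine mem_adjoint_domain_of_exists _ ⟨ContinuousLinearMap.adjoint R (T† ψ), fun u => ?_⟩
  rw [ContinuousLinearMap.adjoint_inner_left, ContinuousLinearMap.adjoint_inner_left, ← hRT,
    adjoint_isFormalAdjoint hT ψ ⟨R u, hR u u.2⟩]

theorem IsClosed.dense_adjoint_domain [CompleteSpace E] [CompleteSpace F] (hT : T.IsClosed) :
    Dense (T†.domain : Set F) := by
  rw [Submodule.dense_iff_topologicalClosure_eq_top, Submodule.topologicalClosure_eq_top_iff,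
    Submodule.eq_bot_iff]
  intro z hz
  let G : Submodule 𝕜 (WithLp 2 (E × F)) :=
    T.graph.comap (WithLp.linearEquiv 2 𝕜 (E × F)).toLinearMap
  have hG : _root_.IsClosed (G : Set (WithLp 2 (E × F))) :=
    hT.preimage (WithLp.prod_continuous_ofLp 2 E F)
  have hmem : WithLp.toLp 2 ((0 : E), z) ∈ G := by
    rw [← hG.submodule_topologicalClosure_eq, ← Submodule.orthogonal_orthogonal_eq_closure]
    intro q hq
    have hq₂ : q.ofLp.2 ∈ T†.domain := by
      refine mem_adjoint_domain_of_exists _ ⟨-q.ofLp.1, fun x => ?_⟩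
      have := hq (WithLp.toLp 2 ((x : E), T x)) (T.mem_graph x)
      rw [WithLp.prod_inner_apply, add_eq_zero_iff_eq_neg] at this
      rw [inner_neg_left, ← inner_conj_symm, this]
      simp
    simpa [WithLp.prod_inner_apply] using hz _ hq₂
  exact T.graph_fst_eq_zero_snd hmem rfl

end Inner

end LinearPMap

open ContinuousLinearMap (adjoint adjoint_inner_left)
open scoped LinearPMap

section Evolutionary

variable {K : Type*} [NormedAddCommGroup K] [InnerProductSpace ℂ K]

variable {D₀ A : K →ₗ.[ℂ] K} {R : ℝ → K →L[ℂ] K} {Mc N Mop : K →L[ℂ] K}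
  (hRdom : ∀ ε, 0 < ε → ∀ x : K, R ε x ∈ D₀.domain)
  (hRval : ∀ ε (hε : 0 < ε) (x : K), D₀ ⟨R ε x, hRdom ε hε x⟩ = ε⁻¹ • (x - R ε x))
  (hRinv : ∀ ε, 0 < ε → ∀ u : D₀.domain, R ε ((u : K) + ε • D₀ u) = u)
  (hMdom : ∀ u ∈ D₀.domain, Mc u ∈ D₀.domain)
  (hMcomm : ∀ u : D₀.domain, Mc (D₀ u) = D₀ ⟨Mc u, hMdom u u.2⟩ + Mop u)
  (hARdom : ∀ ε, 0 < ε → ∀ u ∈ A.domain, R ε u ∈ A.domain)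
  (hARcomm : ∀ ε (hε : 0 < ε) (u : A.domain), A ⟨R ε u, hARdom ε hε u u.2⟩ = R ε (A u))

include hRval hRinv hMcomm in
theorem resolvent_comp_eq_comp_resolvent_add {ε : ℝ} (hε : 0 < ε) :
    R ε ∘L Mc = Mc ∘L R ε + ε • (R ε ∘L Mop ∘L R ε) := by
  ext v
  set u : D₀.domain := ⟨R ε v, hRdom ε hε v⟩
  set w : D₀.domain := ⟨Mc u, hMdom u u.2⟩
  have hv : (u : K) + ε • D₀ u = v := by
    rw [hRval ε hε, smul_smul, mul_inv_cancel₀ hε.ne', one_smul, add_sub_cancel]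
  have hMv : Mc v = ((w : K) + ε • D₀ w) + ε • Mop u := by
    rw [← hv, map_add, ContinuousLinearMap.map_smul_of_tower, hMcomm, smul_add, add_assoc]
  simp only [ContinuousLinearMap.comp_apply, add_apply, smul_apply]
  rw [hMv, map_add, hRinv ε hε w, ContinuousLinearMap.map_smul_of_tower]

include hRval hRinv hMcomm hARcomm in
theorem B0_apply_resolvent {ε : ℝ} (hε : 0 < ε) (x : A.domain) :
    B0 D₀ A Mc N hMdom ⟨R ε x, hRdom ε hε x, hARdom ε hε x x.2⟩
      = ε⁻¹ • (Mc x - R ε (Mc x)) + (R ε (Mop (R ε x)) - Mop (R ε x)) + N (R ε x)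
        + R ε (A x) := by
  have hMR : Mc (R ε x) = R ε (Mc x - ε • Mop (R ε x)) := by
    rw [map_sub, ContinuousLinearMap.map_smul_of_tower, ← ContinuousLinearMap.comp_apply (R ε),
      resolvent_comp_eq_comp_resolvent_add hRdom hRval hRinv hMdom hMcomm hε]
    simp
  have hD₀MR : D₀ ⟨Mc (R ε x), hMdom _ (hRdom ε hε x)⟩
      = ε⁻¹ • (Mc x - R ε (Mc x)) + (R ε (Mop (R ε x)) - Mop (R ε x)) := by
    rw [show (⟨Mc (R ε x), _⟩ : D₀.domain) = ⟨R ε _, hRdom ε hε _⟩ from Subtype.ext hMR,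
      hRval ε hε, map_sub, ContinuousLinearMap.map_smul_of_tower]
    simp only [smul_sub, smul_smul, inv_mul_cancel₀ hε.ne', one_smul]
    abel
  change D₀ ⟨Mc (R ε x), hMdom _ (hRdom ε hε x)⟩ + N (R ε x) + A ⟨R ε x, hARdom ε hε x x.2⟩ = _
  rw [hD₀MR, hARcomm ε hε]

variable [CompleteSpace K]

noncomputable def B0FormalAdjoint (D₀ A : K →ₗ.[ℂ] K) (Mc N : K →L[ℂ] K) : K →ₗ.[ℂ] K where
  domain := D₀†.domain ⊓ A†.domain
  toFun := (adjoint Mc : K →ₗ[ℂ] K) ∘ₗ D₀†.toFun ∘ₗ Submodule.inclusion inf_le_left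
    + (adjoint N : K →ₗ[ℂ] K) ∘ₗ (D₀†.domain ⊓ A†.domain).subtype
    + A†.toFun ∘ₗ Submodule.inclusion inf_le_right

variable (hRadjdom : ∀ ε, 0 < ε → ∀ x : K, adjoint (R ε) x ∈ D₀†.domain)
  (hRadjval : ∀ ε (hε : 0 < ε) (x : K),
    D₀† ⟨adjoint (R ε) x, hRadjdom ε hε x⟩ = ε⁻¹ • (x - adjoint (R ε) x))
  (hRadjtendsto : ∀ x : K, Tendsto (fun ε => adjoint (R ε) x) (𝓝[>] 0) (𝓝 x))

theorem isFormalAdjoint_B0FormalAdjoint (hD₀dense : Dense (D₀.domain : Set K))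
    (hAdense : Dense (A.domain : Set K)) :
    (B0FormalAdjoint D₀ A Mc N).IsFormalAdjoint (B0 D₀ A Mc N hMdom) := by
  rintro ⟨ψ, hψD, hψA⟩ ⟨φ, hφD, hφA⟩
  change ⟪adjoint Mc (D₀† ⟨ψ, hψD⟩) + adjoint N ψ + A† ⟨ψ, hψA⟩, φ⟫_ℂ
    = ⟪ψ, D₀ ⟨Mc φ, hMdom φ hφD⟩ + N φ + A ⟨φ, hφA⟩⟫_ℂ
  rw [inner_add_left, inner_add_left, inner_add_right, inner_add_right, adjoint_inner_left,
    adjoint_inner_left, LinearPMap.adjoint_isFormalAdjoint hD₀dense ⟨ψ, hψD⟩ ⟨Mc φ, _⟩,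
    LinearPMap.adjoint_isFormalAdjoint hAdense ⟨ψ, hψA⟩ ⟨φ, hφA⟩]

include hRadjdom hARcomm hRadjtendsto in
theorem dense_domain_B0FormalAdjoint (hAdense : Dense (A.domain : Set K)) (hAclosed : A.IsClosed) :
    Dense ((B0FormalAdjoint D₀ A Mc N).domain : Set K) := by
  refine dense_closure.mp (hAclosed.dense_adjoint_domain.mono fun ψ hψ => ?_)
  refine mem_closure_of_tendsto (hRadjtendsto ψ) (eventually_mem_nhdsWithin.mono fun ε hε => ?_)
  exact ⟨hRadjdom ε hε ψ, LinearPMap.adjoint_apply_mem_adjoint_domain hAdense (R ε)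
    (hARdom ε hε) (hARcomm ε hε) ⟨ψ, hψ⟩⟩

include hRval hRinv hMcomm hARcomm hRadjval in
theorem exists_B0FormalAdjoint_apply_adjoint_resolvent (hAdense : Dense (A.domain : Set K))
    {ψ : K} (hψ : ∀ φ, ⟪B0 D₀ A Mc N hMdom φ, ψ⟫_ℂ = 0) {ε : ℝ} (hε : 0 < ε) :
    ∃ h : adjoint (R ε) ψ ∈ (B0FormalAdjoint D₀ A Mc N).domain,
      B0FormalAdjoint D₀ A Mc N ⟨_, h⟩ = adjoint (R ε) (adjoint Mop (ψ - adjoint (R ε) ψ))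
        + (adjoint N (adjoint (R ε) ψ) - adjoint (R ε) (adjoint N ψ)) := by
  set ψε := adjoint (R ε) ψ
  set w := adjoint (R ε) (adjoint Mop (ψ - ψε)) - adjoint (R ε) (adjoint N ψ)
    - adjoint Mc (ε⁻¹ • (ψ - ψε))
  have hw : ∀ x : A.domain, ⟪w, x⟫_ℂ = ⟪ψε, A x⟫_ℂ := by
    intro x
    have h0 := inner_eq_zero_symm.mp (hψ ⟨R ε x, hRdom ε hε x, hARdom ε hε x x.2⟩)
    rw [B0_apply_resolvent hRdom hRval hRinv hMdom hMcomm hARdom hARcomm hε] at h0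
    simp only [w, ψε, ← Complex.coe_smul, inner_add_right, inner_sub_right, inner_sub_left,
      inner_smul_right, inner_smul_left, adjoint_inner_left, map_sub, Complex.conj_ofReal] at h0 ⊢
    linear_combination -h0
  refine ⟨⟨hRadjdom ε hε ψ, LinearPMap.mem_adjoint_domain_of_exists _ ⟨w, hw⟩⟩, ?_⟩
  change adjoint Mc (D₀† ⟨ψε, hRadjdom ε hε ψ⟩) + adjoint N ψε + A† ⟨ψε, _⟩ = _
  rw [hRadjval ε hε, LinearPMap.adjoint_apply_eq hAdense _ hw]
  simp only [w, ψε]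
  abel

include hRval hRinv hMcomm hARcomm hRadjval hRadjtendsto in
theorem eq_zero_of_forall_inner_B0_eq_zero (hAdense : Dense (A.domain : Set K))
    (hRnorm : ∀ ε, 0 < ε → ‖R ε‖ ≤ 1) {c : ℝ} (hc : 0 < c)
    (hcoercive : ∀ ψ : (B0FormalAdjoint D₀ A Mc N).domain,
      c * ‖(ψ : K)‖ ^ 2 ≤ RCLike.re ⟪B0FormalAdjoint D₀ A Mc N ψ, ψ⟫_ℂ)
    {ψ : K} (hψ : ∀ φ, ⟪B0 D₀ A Mc N hMdom φ, ψ⟫_ℂ = 0) : ψ = 0 := by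
  have hRadj_norm : ∀ᶠ ε in 𝓝[>] (0 : ℝ), ‖adjoint (R ε)‖ ≤ 1 :=
    eventually_mem_nhdsWithin.mono fun ε hε => (adjoint.norm_map (R ε)).trans_le (hRnorm ε hε)
  have hdiff : Tendsto (fun ε => adjoint Mop (ψ - adjoint (R ε) ψ)) (𝓝[>] 0) (𝓝 0) := by
    rw [← map_zero (adjoint Mop), ← sub_self ψ]
    exact ((adjoint Mop).continuous.tendsto _).comp (tendsto_const_nhds.sub (hRadjtendsto ψ))
  have herr : Tendsto (fun ε => adjoint (R ε) (adjoint Mop (ψ - adjoint (R ε) ψ))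
      + (adjoint N (adjoint (R ε) ψ) - adjoint (R ε) (adjoint N ψ))) (𝓝[>] 0) (𝓝 0) := by
    simpa using (tendsto_apply_zero_of_norm_le hRadj_norm hdiff).add
      ((((adjoint N).continuous.tendsto ψ).comp (hRadjtendsto ψ)).sub (hRadjtendsto (adjoint N ψ)))
  refine eq_zero_of_mul_norm_sq_le_zero hc ?_
  rw [← RCLike.zero_re (K := ℂ), ← inner_zero_left ψ]
  refine mul_norm_sq_le_re_inner_of_tendsto (hRadjtendsto ψ) herr <|
    eventually_mem_nhdsWithin.mono fun ε hε => by
      obtain ⟨h, heq⟩ := exists_B0FormalAdjoint_apply_adjoint_resolvent hRdom hRval hRinv hMdom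
        hMcomm hARdom hARcomm hRadjdom hRadjval hAdense hψ hε
      exact heq ▸ hcoercive ⟨_, h⟩

include hRval hRinv hMcomm hARcomm hRadjval hRadjtendsto in
theorem denseRange_B0 (hAdense : Dense (A.domain : Set K)) (hRnorm : ∀ ε, 0 < ε → ‖R ε‖ ≤ 1)
    {c : ℝ} (hc : 0 < c)
    (hcoercive : ∀ ψ : (B0FormalAdjoint D₀ A Mc N).domain,
      c * ‖(ψ : K)‖ ^ 2 ≤ RCLike.re ⟪B0FormalAdjoint D₀ A Mc N ψ, ψ⟫_ℂ) :
    DenseRange (B0 D₀ A Mc N hMdom) := by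
  change Dense (LinearMap.range (B0 D₀ A Mc N hMdom).toFun : Set K)
  rw [Submodule.dense_iff_topologicalClosure_eq_top, Submodule.topologicalClosure_eq_top_iff,
    Submodule.eq_bot_iff]
  exact fun ψ hψ => eq_zero_of_forall_inner_B0_eq_zero hRdom hRval hRinv hMdom hMcomm hARdom
    hARcomm hRadjdom hRadjval hRadjtendsto hAdense hRnorm hc hcoercive fun φ => hψ _ ⟨φ, rfl⟩

end Evolutionary

theorem stmt3_general
    {K : Type*} [NormedAddCommGroup K] [InnerProductSpace ℂ K] [CompleteSpace K]
    (D₀ : K →ₗ.[ℂ] K) (hD₀dense : Dense (D₀.domain : Set K))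
    (R : ℝ → K →L[ℂ] K)
    (hRdom : ∀ ε, 0 < ε → ∀ x : K, R ε x ∈ D₀.domain)
    (hRval : ∀ ε (hε : 0 < ε) (x : K),
      D₀ ⟨R ε x, hRdom ε hε x⟩ = ε⁻¹ • (x - R ε x))
    (hRinv : ∀ ε, 0 < ε → ∀ u : D₀.domain, R ε ((u : K) + ε • D₀ u) = u)
    (hRnorm : ∀ ε, 0 < ε → ‖R ε‖ ≤ 1)
    (hRadjdom : ∀ ε, 0 < ε → ∀ x : K,
      ContinuousLinearMap.adjoint (R ε) x ∈ D₀.adjoint.domain)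
    (hRadjval : ∀ ε (hε : 0 < ε) (x : K),
      D₀.adjoint ⟨ContinuousLinearMap.adjoint (R ε) x, hRadjdom ε hε x⟩
        = ε⁻¹ • (x - ContinuousLinearMap.adjoint (R ε) x))
    (hRadjtendsto : ∀ x : K,
      Tendsto (fun ε => ContinuousLinearMap.adjoint (R ε) x) (nhdsWithin 0 (Set.Ioi 0)) (nhds x))
    (Mc N Mop : K →L[ℂ] K)
    (hMdom : ∀ u ∈ D₀.domain, Mc u ∈ D₀.domain)
    (hMcomm : ∀ u : D₀.domain, Mc (D₀ u) = D₀ ⟨Mc u, hMdom u u.2⟩ + Mop u)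
    (A : K →ₗ.[ℂ] K) (hAdense : Dense (A.domain : Set K)) (hAclosed : A.IsClosed)
    (hARdom : ∀ ε, 0 < ε → ∀ u ∈ A.domain, R ε u ∈ A.domain)
    (hARcomm : ∀ ε (hε : 0 < ε) (u : A.domain),
      A ⟨R ε u, hARdom ε hε u u.2⟩ = R ε (A u))
    -- the family of truncation projections
    (P : ℝ → K →L[ℂ] K)
    (hPsa : ∀ a : ℝ, IsSelfAdjoint (P a))
    (hPtendsto : ∀ x : K, Tendsto (fun a => P a x) atTop (nhds x))
    (c : ℝ) (hc : 0 < c)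
    (hpos : ∀ (a : ℝ) (φ : K) (hφ : φ ∈ D₀.domain ⊓ A.domain),
      c * ‖P a φ‖ ^ 2 ≤ (inner ℂ (B0 D₀ A Mc N hMdom ⟨φ, hφ⟩) (P a φ) : ℂ).re)
    (hposadj : ∀ (ψ : K) (hψd : ψ ∈ D₀.adjoint.domain) (hψa : ψ ∈ A.adjoint.domain),
      c * ‖ψ‖ ^ 2 ≤ (inner ℂ (ContinuousLinearMap.adjoint Mc (D₀.adjoint ⟨ψ, hψd⟩)
          + ContinuousLinearMap.adjoint N ψ + A.adjoint ⟨ψ, hψa⟩) ψ : ℂ).re) :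
    (B0 D₀ A Mc N hMdom).IsClosable ∧
    Function.Bijective (fun u : (B0 D₀ A Mc N hMdom).closure.domain =>
      (B0 D₀ A Mc N hMdom).closure u) ∧
    (∀ u : (B0 D₀ A Mc N hMdom).closure.domain,
      ‖(u : K)‖ ≤ (1 / c) * ‖(B0 D₀ A Mc N hMdom).closure u‖) ∧
    -- causality of the solution operator `B⁻¹`
    (∀ (a : ℝ) (u : (B0 D₀ A Mc N hMdom).closure.domain),
      P a ((B0 D₀ A Mc N hMdom).closure u) = 0 → P a (u : K) = 0) := by
  set B := B0 D₀ A Mc N hMdom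
  have hclosable : B.IsClosable := LinearPMap.isClosable_of_isFormalAdjoint
    (dense_domain_B0FormalAdjoint hARdom hARcomm hRadjdom hRadjtendsto hAdense hAclosed)
    (isFormalAdjoint_B0FormalAdjoint hMdom hD₀dense hAdense)
  have hcoercive : ∀ a (u : B.closure.domain),
      c * ‖P a u‖ ^ 2 ≤ RCLike.re ⟪B.closure u, P a u⟫_ℂ := fun a =>
    hclosable.closure_apply_mem (C := {p | c * ‖P a p.1‖ ^ 2 ≤ RCLike.re ⟪p.2, P a p.1⟫_ℂ})
      (isClosed_le (by fun_prop) (by fun_prop)) fun φ => hpos a φ φ.2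
  have hbound : ∀ u : B.closure.domain, ‖(u : K)‖ ≤ 1 / c * ‖B.closure u‖ := fun u => by
    rw [one_div_mul_eq_div, le_div_iff₀' hc]
    exact mul_norm_le_of_mul_norm_sq_le_re_inner <| mul_norm_sq_le_re_inner_of_tendsto
      (hPtendsto u) tendsto_const_nhds (.of_forall fun a => hcoercive a u)
  have hdense : DenseRange B.closure := by
    refine Dense.mono ?_ (denseRange_B0 hRdom hRval hRinv hMdom hMcomm hARdom hARcomm hRadjdom
      hRadjval hRadjtendsto hAdense hRnorm hc fun ψ => hposadj ψ ψ.2.1 ψ.2.2)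
    rintro _ ⟨φ, rfl⟩
    exact ⟨⟨φ, B.le_closure.1 φ.2⟩, (B.le_closure.2 rfl).symm⟩
  refine ⟨hclosable, hclosable.closure_isClosed.bijective_of_norm_le hbound hdense, hbound,
    fun a u hu => eq_zero_of_mul_norm_sq_le_zero hc ((hcoercive a u).trans_eq ?_)⟩
  have hPsymm : ⟪P a (B.closure u), u⟫_ℂ = ⟪B.closure u, P a u⟫_ℂ := (hPsa a).isSymmetric _ _
  rw [← hPsymm, hu, inner_zero_left, RCLike.zero_re]

theorem stmt3
    {K : Type*} [NormedAddCommGroup K] [InnerProductSpace ℂ K] [CompleteSpace K]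
    (D₀ : K →ₗ.[ℂ] K) (hD₀dense : Dense (D₀.domain : Set K)) (hD₀closed : D₀.IsClosed)
    (R : ℝ → K →L[ℂ] K)
    (hRdom : ∀ ε, 0 < ε → ∀ x : K, R ε x ∈ D₀.domain)
    (hRval : ∀ ε (hε : 0 < ε) (x : K),
      D₀ ⟨R ε x, hRdom ε hε x⟩ = ε⁻¹ • (x - R ε x))
    (hRinv : ∀ ε, 0 < ε → ∀ u : D₀.domain, R ε ((u : K) + ε • D₀ u) = u)
    (hRnorm : ∀ ε, 0 < ε → ‖R ε‖ ≤ 1)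
    (hRtendsto : ∀ x : K, Tendsto (fun ε => R ε x) (nhdsWithin 0 (Set.Ioi 0)) (nhds x))
    (hRadjdom : ∀ ε, 0 < ε → ∀ x : K,
      ContinuousLinearMap.adjoint (R ε) x ∈ D₀.adjoint.domain)
    (hRadjval : ∀ ε (hε : 0 < ε) (x : K),
      D₀.adjoint ⟨ContinuousLinearMap.adjoint (R ε) x, hRadjdom ε hε x⟩
        = ε⁻¹ • (x - ContinuousLinearMap.adjoint (R ε) x))
    (hRadjtendsto : ∀ x : K,
      Tendsto (fun ε => ContinuousLinearMap.adjoint (R ε) x) (nhdsWithin 0 (Set.Ioi 0)) (nhds x))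
    (Mc N Mop : K →L[ℂ] K)
    (hMdom : ∀ u ∈ D₀.domain, Mc u ∈ D₀.domain)
    (hMcomm : ∀ u : D₀.domain, Mc (D₀ u) = D₀ ⟨Mc u, hMdom u u.2⟩ + Mop u)
    (A : K →ₗ.[ℂ] K) (hAdense : Dense (A.domain : Set K)) (hAclosed : A.IsClosed)
    (hARdom : ∀ ε, 0 < ε → ∀ u ∈ A.domain, R ε u ∈ A.domain)
    (hARcomm : ∀ ε (hε : 0 < ε) (u : A.domain),
      A ⟨R ε u, hARdom ε hε u u.2⟩ = R ε (A u))
    -- the family of truncation projections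
    (P : ℝ → K →L[ℂ] K)
    (hPsa : ∀ a : ℝ, IsSelfAdjoint (P a))
    (hPidem : ∀ a : ℝ, (P a).comp (P a) = P a)
    (hPtendsto : ∀ x : K, Tendsto (fun a => P a x) atTop (nhds x))
    -- causality of 𝓜 and 𝓝
    (hMcausal : ∀ (a : ℝ) (u : K), P a (Mc u) = P a (Mc (P a u)))
    (hNcausal : ∀ (a : ℝ) (u : K), P a (N u) = P a (N (P a u)))
    (c : ℝ) (hc : 0 < c)
    (hpos : ∀ (a : ℝ) (φ : K) (hφ : φ ∈ D₀.domain ⊓ A.domain),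
      c * ‖P a φ‖ ^ 2 ≤ (inner ℂ (B0 D₀ A Mc N hMdom ⟨φ, hφ⟩) (P a φ) : ℂ).re)
    (hposadj : ∀ (ψ : K) (hψd : ψ ∈ D₀.adjoint.domain) (hψa : ψ ∈ A.adjoint.domain),
      c * ‖ψ‖ ^ 2 ≤ (inner ℂ (ContinuousLinearMap.adjoint Mc (D₀.adjoint ⟨ψ, hψd⟩)
          + ContinuousLinearMap.adjoint N ψ + A.adjoint ⟨ψ, hψa⟩) ψ : ℂ).re) :
    (B0 D₀ A Mc N hMdom).IsClosable ∧
    Function.Bijective (fun u : (B0 D₀ A Mc N hMdom).closure.domain =>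
      (B0 D₀ A Mc N hMdom).closure u) ∧
    (∀ u : (B0 D₀ A Mc N hMdom).closure.domain,
      ‖(u : K)‖ ≤ (1 / c) * ‖(B0 D₀ A Mc N hMdom).closure u‖) ∧
    -- causality of the solution operator `B⁻¹`
    (∀ (a : ℝ) (u : (B0 D₀ A Mc N hMdom).closure.domain),
      P a ((B0 D₀ A Mc N hMdom).closure u) = 0 → P a (u : K) = 0) :=
  stmt3_general D₀ hD₀dense R hRdom hRval hRinv hRnorm hRadjdom hRadjval hRadjtendsto Mc N Mop hMdom
    hMcomm A hAdense hAclosed hARdom hARcomm P hPsa hPtendsto c hc hpos hposadj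
end

section
/- Assume there is c > 0 such that Re⟨B₀φ, φ⟩ ≥ c‖φ‖² for all φ ∈ dom(D₀) ∩ dom(A) and Re⟨𝓜*(D₀*ψ) + 𝓝*ψ + A*ψ, ψ⟩ ≥ c‖ψ‖² for all ψ ∈ dom(D₀*) ∩ dom(A*), so that B₀ is closable with boundedly invertible closure B. Let F ⊆ dom(A) be a core for A (i.e., A is the closure of its restriction to F). Then the linear span 𝓕 of ⋃_{δ>0} R_δ[F] is contained in dom(D₀) ∩ dom(A) and is a core for B: the closure of the restriction of B to 𝓕 equals B. -/
open Filter

/-!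
If `(0, y)` lies in the closure of the graph of `B₀`, the lower bound `c ‖φ‖² ≤ Re ⟪B₀ φ, φ⟫`,
which survives in the closure, applied at `(0, y) + t (φ, B₀ φ)` with `t = -s ⟪y, φ⟫̄`, `s → 0⁺`,
forces `y ⊥ φ`; as `dom B₀ ⊇ R_δ[dom A]` is dense, `y = 0` and `B₀` is closable.

For the core property, the commutation relations of `R_δ` with `D₀`, `𝓜` and `A` express
`(R_δ u, B₀ R_δ u)` as a continuous function `Ψ_δ` of `(u, A u)`. Since `F` is a core for `A`,
`Ψ_δ (z, A z)` is a limit of points `Ψ_δ (f, A f)`, `f ∈ F`, which lie in the graph of `B₀`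
restricted to `𝓕`; and `Ψ_δ (z, A z) → (z, B₀ z)` as `δ → 0⁺` for every `z ∈ dom B₀`.
-/

open Topology RCLike ComplexConjugate

section InnerProduct

variable {𝕜 E : Type*} [RCLike 𝕜] [NormedAddCommGroup E] [InnerProductSpace 𝕜 E]

lemma inner_eq_zero_of_forall_le_re_inner {c : ℝ} {y v w : E}
    (h : ∀ t : 𝕜, c * ‖t • v‖ ^ 2 ≤ re (inner 𝕜 (y + t • w) (t • v))) :
    inner 𝕜 y v = 0 := by
  set a := inner 𝕜 y v
  set C := ‖a‖ ^ 2 * (re (inner 𝕜 w v) - c * ‖v‖ ^ 2)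
  -- test against `t = -s ā`, which makes the term linear in `t` equal to `-s ‖a‖²`
  have key : ∀ s : ℝ, 0 < s → ‖a‖ ^ 2 ≤ s * C := by
    intro s hs
    have hs' := h (-(s : 𝕜) * conj a)
    have hre : re (inner 𝕜 (y + (-(s : 𝕜) * conj a) • w) ((-(s : 𝕜) * conj a) • v))
        = -s * ‖a‖ ^ 2 + s ^ 2 * ‖a‖ ^ 2 * re (inner 𝕜 w v) := by
      rw [inner_add_left, inner_smul_left, inner_smul_right, inner_smul_right, map_add]
      have hlin : -(s : 𝕜) * conj a * a = ((-s * ‖a‖ ^ 2 : ℝ) : 𝕜) := by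
        rw [mul_assoc, RCLike.conj_mul]; push_cast; ring
      have hquad : conj (-(s : 𝕜) * conj a) * (-(s : 𝕜) * conj a * inner 𝕜 w v)
          = ((s ^ 2 * ‖a‖ ^ 2 : ℝ) : 𝕜) * inner 𝕜 w v := by
        rw [← mul_assoc, RCLike.conj_mul, norm_mul, norm_neg, norm_conj, norm_ofReal,
          abs_of_pos hs]; push_cast; ring
      rw [hlin, hquad, re_ofReal_mul, ofReal_re]
    rw [hre, norm_smul, norm_mul, norm_neg, norm_conj, norm_ofReal, abs_of_pos hs] at hs'
    nlinarith
  refine norm_eq_zero.mp (pow_eq_zero_iff two_ne_zero |>.mp (le_antisymm ?_ (by positivity)))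
  refine ge_of_tendsto (f := fun s : ℝ => s * C) (x := 𝓝[>] 0) ?_ ?_
  · simpa using (tendsto_id.mul_const C).mono_left (nhdsWithin_le_nhds (a := (0 : ℝ)))
  · filter_upwards [self_mem_nhdsWithin] with s hs using key s hs

end InnerProduct

theorem Dense.of_tendsto_of_mapsTo {X ι : Type*} [TopologicalSpace X] {l : Filter ι} [l.NeBot]
    {s t : Set X} (hs : Dense s) {f : ι → X → X} (hf : ∀ x ∈ s, Tendsto (f · x) l (𝓝 x))
    (hst : ∀ᶠ i in l, Set.MapsTo (f i) s t) : Dense t := by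
  refine dense_closure.mp (hs.mono fun x hx => mem_closure_of_tendsto (hf x hx) ?_)
  filter_upwards [hst] with i hi using hi hx

namespace LinearPMap

section Closable

variable {𝕜 E : Type*} [RCLike 𝕜] [NormedAddCommGroup E] [InnerProductSpace 𝕜 E]

lemma le_re_inner_of_mem_topologicalClosure_graph {T : E →ₗ.[𝕜] E} {c : ℝ}
    (hT : ∀ x : T.domain, c * ‖(x : E)‖ ^ 2 ≤ re (inner 𝕜 (T x) (x : E)))
    {p : E × E} (hp : p ∈ T.graph.topologicalClosure) :
    c * ‖p.1‖ ^ 2 ≤ re (inner 𝕜 p.2 p.1) := by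
  have hclosed : _root_.IsClosed {q : E × E | c * ‖q.1‖ ^ 2 ≤ re (inner 𝕜 q.2 q.1)} :=
    isClosed_le (by fun_prop) (by fun_prop)
  refine closure_minimal (fun q hq => ?_) hclosed hp
  obtain ⟨x, hx₁, hx₂⟩ := (mem_graph_iff T).mp hq
  rw [Set.mem_ofPred_eq, ← hx₁, ← hx₂]
  exact hT x

theorem isClosable_of_le_re_inner {T : E →ₗ.[𝕜] E} (hdense : Dense (T.domain : Set E)) {c : ℝ}
    (hT : ∀ x : T.domain, c * ‖(x : E)‖ ^ 2 ≤ re (inner 𝕜 (T x) (x : E))) :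
    T.IsClosable := by
  refine ⟨T.graph.topologicalClosure.toLinearPMap,
    (Submodule.toLinearPMap_graph_eq _ fun p hp hp1 => ?_).symm⟩
  refine hdense.eq_zero_of_inner_left 𝕜 fun v hv =>
    inner_eq_zero_of_forall_le_re_inner (c := c) (w := T ⟨v, hv⟩) fun t => ?_
  have hmem : p + t • ((v, T ⟨v, hv⟩) : E × E) ∈ T.graph.topologicalClosure :=
    add_mem hp (Submodule.smul_mem _ t (T.graph.le_topologicalClosure (T.mem_graph ⟨v, hv⟩)))
  simpa [hp1] using le_re_inner_of_mem_topologicalClosure_graph hT hmem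

end Closable

section Core

variable {R E F : Type*} [CommRing R] [AddCommGroup E] [Module R E] [AddCommGroup F] [Module R F]

lemma domRestrict_mono {f g : E →ₗ.[R] F} (h : f ≤ g) (S : Submodule R E) :
    f.domRestrict S ≤ g.domRestrict S := by
  refine ⟨inf_le_inf_left S h.1, fun x y hxy => ?_⟩
  have hx : f.domRestrict S x = f ⟨x, x.2.2⟩ := domRestrict_apply (x := x) rfl
  have hy : g.domRestrict S y = g ⟨y, y.2.2⟩ := domRestrict_apply (x := y) rfl
  rw [hx, hy]
  exact h.2 hxy

variable [TopologicalSpace R] [TopologicalSpace E] [ContinuousAdd E] [ContinuousSMul R E]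
  [TopologicalSpace F] [ContinuousAdd F] [ContinuousSMul R F]

lemma graph_closure_le_topologicalClosure_graph (f : E →ₗ.[R] F) :
    f.closure.graph ≤ f.graph.topologicalClosure := by
  by_cases hf : f.IsClosable
  · exact hf.graph_closure_eq_closure_graph.ge
  · rw [closure_def' hf]
    exact f.graph.le_topologicalClosure

theorem IsClosable.closure_hasCore {T : E →ₗ.[R] F} (hT : T.IsClosable) {D : Submodule R E}
    (hD : D ≤ T.domain) (h : T.graph ≤ (T.domRestrict D).graph.topologicalClosure) :
    T.closure.HasCore D := by
  refine ⟨hD.trans T.le_closure.1, eq_of_eq_graph ?_⟩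
  have hclosable : (T.closure.domRestrict D).IsClosable :=
    hT.closureIsClosable.leIsClosable domRestrict_le
  rw [← hclosable.graph_closure_eq_closure_graph]
  refine le_antisymm ?_ ?_
  · rw [← hT.closure_isClosed.submodule_topologicalClosure_eq]
    exact Submodule.topologicalClosure_mono (le_graph_of_le domRestrict_le)
  · rw [← hT.graph_closure_eq_closure_graph]
    refine Submodule.topologicalClosure_minimal _ (h.trans ?_)
      (Submodule.isClosed_topologicalClosure _)
    exact Submodule.topologicalClosure_mono (le_graph_of_le (domRestrict_mono T.le_closure D))

end Core

end LinearPMap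

section ResolventApproximation

variable {K : Type*} [NormedAddCommGroup K] [InnerProductSpace ℂ K]

def resolventSpan (R : ℝ → K →L[ℂ] K) (F : Submodule ℂ K) : Submodule ℂ K :=
  Submodule.span ℂ (⋃ δ ∈ Set.Ioi (0 : ℝ), R δ '' (F : Set K))

/-- `(u, A u) ↦ (R δ u, B₀ (R δ u))`, rewritten through the commutation relations so that it
extends to a continuous map on `K × K`. -/
noncomputable def resolventGraphMap (R : ℝ → K →L[ℂ] K) (Mc N Mop : K →L[ℂ] K) (δ : ℝ)
    (p : K × K) : K × K :=
  (R δ p.1, δ⁻¹ • Mc (p.1 - R δ p.1) - Mop (R δ p.1) + N (R δ p.1) + R δ p.2)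

lemma continuous_resolventGraphMap (R : ℝ → K →L[ℂ] K) (Mc N Mop : K →L[ℂ] K) (δ : ℝ) :
    Continuous (resolventGraphMap R Mc N Mop δ) := by
  unfold resolventGraphMap
  fun_prop

variable {D₀ A : K →ₗ.[ℂ] K} {R : ℝ → K →L[ℂ] K} {Mc N Mop : K →L[ℂ] K}
  {hMdom : ∀ u ∈ D₀.domain, Mc u ∈ D₀.domain}

lemma resolventSpan_le (hRdom : ∀ ε, 0 < ε → ∀ x : K, R ε x ∈ D₀.domain)
    (hARdom : ∀ ε, 0 < ε → ∀ u ∈ A.domain, R ε u ∈ A.domain)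
    {F : Submodule ℂ K} (hF : F ≤ A.domain) :
    resolventSpan R F ≤ D₀.domain ⊓ A.domain := by
  refine Submodule.span_le.mpr fun x hx => ?_
  simp only [Set.mem_iUnion, Set.mem_image] at hx
  obtain ⟨δ, hδ, f, hf, rfl⟩ := hx
  exact ⟨hRdom δ hδ f, hARdom δ hδ f (hF hf)⟩

lemma resolvent_D₀_apply
    (hRinv : ∀ ε, 0 < ε → ∀ u : D₀.domain, R ε ((u : K) + ε • D₀ u) = u)
    {δ : ℝ} (hδ : 0 < δ) (u : D₀.domain) :
    R δ (D₀ u) = δ⁻¹ • ((u : K) - R δ u) := by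
  have h := hRinv δ hδ u
  rw [map_add, ContinuousLinearMap.map_smul_of_tower] at h
  rw [← eq_sub_of_add_eq' h, inv_smul_smul₀ hδ.ne']

lemma B0_apply (φ : K) (hφ : φ ∈ D₀.domain ⊓ A.domain) :
    B0 D₀ A Mc N hMdom ⟨φ, hφ⟩ = D₀ ⟨Mc φ, hMdom φ hφ.1⟩ + N φ + A ⟨φ, hφ.2⟩ :=
  rfl

lemma B0_apply_eq (hMcomm : ∀ u : D₀.domain, Mc (D₀ u) = D₀ ⟨Mc u, hMdom u u.2⟩ + Mop u)
    (φ : K) (hφ : φ ∈ D₀.domain ⊓ A.domain) :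
    B0 D₀ A Mc N hMdom ⟨φ, hφ⟩ = Mc (D₀ ⟨φ, hφ.1⟩) - Mop φ + N φ + A ⟨φ, hφ.2⟩ := by
  rw [B0_apply, hMcomm ⟨φ, hφ.1⟩, add_sub_cancel_right]

lemma resolventGraphMap_apply_graph
    (hMcomm : ∀ u : D₀.domain, Mc (D₀ u) = D₀ ⟨Mc u, hMdom u u.2⟩ + Mop u)
    (hRdom : ∀ ε, 0 < ε → ∀ x : K, R ε x ∈ D₀.domain)
    (hRval : ∀ ε (hε : 0 < ε) (x : K), D₀ ⟨R ε x, hRdom ε hε x⟩ = ε⁻¹ • (x - R ε x))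
    (hARdom : ∀ ε, 0 < ε → ∀ u ∈ A.domain, R ε u ∈ A.domain)
    (hARcomm : ∀ ε (hε : 0 < ε) (u : A.domain), A ⟨R ε u, hARdom ε hε u u.2⟩ = R ε (A u))
    {δ : ℝ} (hδ : 0 < δ) (u : A.domain) (hmem : R δ u ∈ D₀.domain ⊓ A.domain) :
    resolventGraphMap R Mc N Mop δ ((u : K), A u)
      = (R δ u, B0 D₀ A Mc N hMdom ⟨R δ u, hmem⟩) := by
  rw [B0_apply_eq hMcomm, hRval δ hδ, hARcomm δ hδ, ContinuousLinearMap.map_smul_of_tower]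
  rfl

lemma mapsTo_resolventGraphMap_graph
    (hMcomm : ∀ u : D₀.domain, Mc (D₀ u) = D₀ ⟨Mc u, hMdom u u.2⟩ + Mop u)
    (hRdom : ∀ ε, 0 < ε → ∀ x : K, R ε x ∈ D₀.domain)
    (hRval : ∀ ε (hε : 0 < ε) (x : K), D₀ ⟨R ε x, hRdom ε hε x⟩ = ε⁻¹ • (x - R ε x))
    (hARdom : ∀ ε, 0 < ε → ∀ u ∈ A.domain, R ε u ∈ A.domain)
    (hARcomm : ∀ ε (hε : 0 < ε) (u : A.domain), A ⟨R ε u, hARdom ε hε u u.2⟩ = R ε (A u))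
    (F : Submodule ℂ K) {δ : ℝ} (hδ : 0 < δ) :
    Set.MapsTo (resolventGraphMap R Mc N Mop δ) (A.domRestrict F).graph
      ((B0 D₀ A Mc N hMdom).domRestrict (resolventSpan R F)).graph := by
  rintro ⟨u, v⟩ hp
  obtain ⟨w, rfl, rfl⟩ := (LinearPMap.mem_graph_iff _).mp hp
  have hwF : (w : K) ∈ F := w.2.1
  have hRw : R δ w ∈ D₀.domain ⊓ A.domain := ⟨hRdom δ hδ w, hARdom δ hδ w w.2.2⟩
  have hspan : R δ w ∈ resolventSpan R F :=
    Submodule.subset_span (Set.mem_biUnion hδ (Set.mem_image_of_mem _ hwF))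
  have hAw : A.domRestrict F w = A ⟨w, w.2.2⟩ := LinearPMap.domRestrict_apply (x := w) rfl
  rw [hAw, resolventGraphMap_apply_graph hMcomm hRdom hRval hARdom hARcomm hδ ⟨w, w.2.2⟩ hRw]
  exact (LinearPMap.mem_graph_iff _).mpr
    ⟨⟨R δ w, hspan, hRw⟩, rfl, LinearPMap.domRestrict_apply (x := ⟨R δ w, hspan, hRw⟩) rfl⟩

lemma tendsto_resolventGraphMap
    (hMcomm : ∀ u : D₀.domain, Mc (D₀ u) = D₀ ⟨Mc u, hMdom u u.2⟩ + Mop u)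
    (hRinv : ∀ ε, 0 < ε → ∀ u : D₀.domain, R ε ((u : K) + ε • D₀ u) = u)
    (hRtendsto : ∀ x : K, Tendsto (fun ε => R ε x) (𝓝[>] 0) (𝓝 x))
    (z : K) (hz : z ∈ D₀.domain ⊓ A.domain) :
    Tendsto (fun δ => resolventGraphMap R Mc N Mop δ (z, A ⟨z, hz.2⟩)) (𝓝[>] 0)
      (𝓝 (z, B0 D₀ A Mc N hMdom ⟨z, hz⟩)) := by
  have heq : ∀ᶠ δ in 𝓝[>] (0 : ℝ), (R δ z, Mc (R δ (D₀ ⟨z, hz.1⟩)) - Mop (R δ z) + N (R δ z)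
      + R δ (A ⟨z, hz.2⟩)) = resolventGraphMap R Mc N Mop δ (z, A ⟨z, hz.2⟩) := by
    filter_upwards [self_mem_nhdsWithin] with δ hδ
    rw [resolvent_D₀_apply hRinv hδ, ContinuousLinearMap.map_smul_of_tower]
    rfl
  rw [B0_apply_eq hMcomm]
  refine Tendsto.congr' heq ((hRtendsto z).prodMk_nhds ?_)
  exact ((((Mc.continuous.tendsto _).comp (hRtendsto _)).sub
    ((Mop.continuous.tendsto _).comp (hRtendsto z))).add
    ((N.continuous.tendsto _).comp (hRtendsto z))).add (hRtendsto _)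

theorem graph_B0_le_topologicalClosure_graph_domRestrict_resolventSpan
    (hMcomm : ∀ u : D₀.domain, Mc (D₀ u) = D₀ ⟨Mc u, hMdom u u.2⟩ + Mop u)
    (hRdom : ∀ ε, 0 < ε → ∀ x : K, R ε x ∈ D₀.domain)
    (hRval : ∀ ε (hε : 0 < ε) (x : K), D₀ ⟨R ε x, hRdom ε hε x⟩ = ε⁻¹ • (x - R ε x))
    (hRinv : ∀ ε, 0 < ε → ∀ u : D₀.domain, R ε ((u : K) + ε • D₀ u) = u)
    (hRtendsto : ∀ x : K, Tendsto (fun ε => R ε x) (𝓝[>] 0) (𝓝 x))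
    (hARdom : ∀ ε, 0 < ε → ∀ u ∈ A.domain, R ε u ∈ A.domain)
    (hARcomm : ∀ ε (hε : 0 < ε) (u : A.domain), A ⟨R ε u, hARdom ε hε u u.2⟩ = R ε (A u))
    {F : Submodule ℂ K} (hFcore : (A.domRestrict F).closure = A) :
    (B0 D₀ A Mc N hMdom).graph
      ≤ ((B0 D₀ A Mc N hMdom).domRestrict (resolventSpan R F)).graph.topologicalClosure := by
  rintro ⟨z, y⟩ hzy
  obtain ⟨⟨z, hz⟩, rfl, rfl⟩ := (LinearPMap.mem_graph_iff _).mp hzy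
  have hAz : ((z : K), A ⟨z, hz.2⟩) ∈ closure ((A.domRestrict F).graph : Set (K × K)) :=
    (A.domRestrict F).graph_closure_le_topologicalClosure_graph
      (by rw [hFcore]; exact A.mem_graph ⟨z, hz.2⟩)
  rw [← SetLike.mem_coe, Submodule.topologicalClosure_coe, ← closure_closure]
  refine mem_closure_of_tendsto (tendsto_resolventGraphMap hMcomm hRinv hRtendsto z hz) ?_
  filter_upwards [self_mem_nhdsWithin] with δ hδ
  exact map_mem_closure (continuous_resolventGraphMap R Mc N Mop δ) hAz
    (mapsTo_resolventGraphMap_graph hMcomm hRdom hRval hARdom hARcomm F hδ)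

end ResolventApproximation

theorem stmt4_general
    {K : Type*} [NormedAddCommGroup K] [InnerProductSpace ℂ K]
    (D₀ : K →ₗ.[ℂ] K)
    (R : ℝ → K →L[ℂ] K)
    (hRdom : ∀ ε, 0 < ε → ∀ x : K, R ε x ∈ D₀.domain)
    (hRval : ∀ ε (hε : 0 < ε) (x : K),
      D₀ ⟨R ε x, hRdom ε hε x⟩ = ε⁻¹ • (x - R ε x))
    (hRinv : ∀ ε, 0 < ε → ∀ u : D₀.domain, R ε ((u : K) + ε • D₀ u) = u)
    (hRtendsto : ∀ x : K, Tendsto (fun ε => R ε x) (nhdsWithin 0 (Set.Ioi 0)) (nhds x))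
    (Mc N Mop : K →L[ℂ] K)
    (hMdom : ∀ u ∈ D₀.domain, Mc u ∈ D₀.domain)
    (hMcomm : ∀ u : D₀.domain, Mc (D₀ u) = D₀ ⟨Mc u, hMdom u u.2⟩ + Mop u)
    (A : K →ₗ.[ℂ] K) (hAdense : Dense (A.domain : Set K))
    (hARdom : ∀ ε, 0 < ε → ∀ u ∈ A.domain, R ε u ∈ A.domain)
    (hARcomm : ∀ ε (hε : 0 < ε) (u : A.domain),
      A ⟨R ε u, hARdom ε hε u u.2⟩ = R ε (A u))
    (c : ℝ)
    (hpos : ∀ (φ : K) (hφ : φ ∈ D₀.domain ⊓ A.domain),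
      c * ‖φ‖ ^ 2 ≤ (inner ℂ (B0 D₀ A Mc N hMdom ⟨φ, hφ⟩) φ : ℂ).re)
    -- `F` is a core for `A`
    (F : Submodule ℂ K) (hF : F ≤ A.domain)
    (hFcore : (A.domRestrict F).closure = A) :
    (B0 D₀ A Mc N hMdom).IsClosable ∧
    Submodule.span ℂ (⋃ δ ∈ Set.Ioi (0 : ℝ), R δ '' (F : Set K)) ≤ D₀.domain ⊓ A.domain ∧
    ((B0 D₀ A Mc N hMdom).closure.domRestrict
        (Submodule.span ℂ (⋃ δ ∈ Set.Ioi (0 : ℝ), R δ '' (F : Set K)))).closure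
      = (B0 D₀ A Mc N hMdom).closure := by
  have hdense : Dense ((D₀.domain ⊓ A.domain : Submodule ℂ K) : Set K) :=
    hAdense.of_tendsto_of_mapsTo (fun x _ => hRtendsto x) <| by
      filter_upwards [self_mem_nhdsWithin] with δ hδ x hx using ⟨hRdom δ hδ x, hARdom δ hδ x hx⟩
  have hclosable : (B0 D₀ A Mc N hMdom).IsClosable :=
    LinearPMap.isClosable_of_le_re_inner hdense fun φ => hpos φ φ.2
  have hspan := resolventSpan_le hRdom hARdom hF
  have hcore := hclosable.closure_hasCore hspan
    (graph_B0_le_topologicalClosure_graph_domRestrict_resolventSpan hMcomm hRdom hRval hRinv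
      hRtendsto hARdom hARcomm hFcore)
  exact ⟨hclosable, hspan, hcore.closure_eq⟩

theorem stmt4
    {K : Type*} [NormedAddCommGroup K] [InnerProductSpace ℂ K] [CompleteSpace K]
    (D₀ : K →ₗ.[ℂ] K) (hD₀dense : Dense (D₀.domain : Set K)) (hD₀closed : D₀.IsClosed)
    (R : ℝ → K →L[ℂ] K)
    (hRdom : ∀ ε, 0 < ε → ∀ x : K, R ε x ∈ D₀.domain)
    (hRval : ∀ ε (hε : 0 < ε) (x : K),
      D₀ ⟨R ε x, hRdom ε hε x⟩ = ε⁻¹ • (x - R ε x))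
    (hRinv : ∀ ε, 0 < ε → ∀ u : D₀.domain, R ε ((u : K) + ε • D₀ u) = u)
    (hRnorm : ∀ ε, 0 < ε → ‖R ε‖ ≤ 1)
    (hRtendsto : ∀ x : K, Tendsto (fun ε => R ε x) (nhdsWithin 0 (Set.Ioi 0)) (nhds x))
    (hRadjdom : ∀ ε, 0 < ε → ∀ x : K,
      ContinuousLinearMap.adjoint (R ε) x ∈ D₀.adjoint.domain)
    (hRadjval : ∀ ε (hε : 0 < ε) (x : K),
      D₀.adjoint ⟨ContinuousLinearMap.adjoint (R ε) x, hRadjdom ε hε x⟩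
        = ε⁻¹ • (x - ContinuousLinearMap.adjoint (R ε) x))
    (hRadjtendsto : ∀ x : K,
      Tendsto (fun ε => ContinuousLinearMap.adjoint (R ε) x) (nhdsWithin 0 (Set.Ioi 0)) (nhds x))
    (Mc N Mop : K →L[ℂ] K)
    (hMdom : ∀ u ∈ D₀.domain, Mc u ∈ D₀.domain)
    (hMcomm : ∀ u : D₀.domain, Mc (D₀ u) = D₀ ⟨Mc u, hMdom u u.2⟩ + Mop u)
    (A : K →ₗ.[ℂ] K) (hAdense : Dense (A.domain : Set K)) (hAclosed : A.IsClosed)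
    (hARdom : ∀ ε, 0 < ε → ∀ u ∈ A.domain, R ε u ∈ A.domain)
    (hARcomm : ∀ ε (hε : 0 < ε) (u : A.domain),
      A ⟨R ε u, hARdom ε hε u u.2⟩ = R ε (A u))
    (c : ℝ) (hc : 0 < c)
    (hpos : ∀ (φ : K) (hφ : φ ∈ D₀.domain ⊓ A.domain),
      c * ‖φ‖ ^ 2 ≤ (inner ℂ (B0 D₀ A Mc N hMdom ⟨φ, hφ⟩) φ : ℂ).re)
    (hposadj : ∀ (ψ : K) (hψd : ψ ∈ D₀.adjoint.domain) (hψa : ψ ∈ A.adjoint.domain),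
      c * ‖ψ‖ ^ 2 ≤ (inner ℂ (ContinuousLinearMap.adjoint Mc (D₀.adjoint ⟨ψ, hψd⟩)
          + ContinuousLinearMap.adjoint N ψ + A.adjoint ⟨ψ, hψa⟩) ψ : ℂ).re)
    -- `F` is a core for `A`
    (F : Submodule ℂ K) (hF : F ≤ A.domain)
    (hFcore : (A.domRestrict F).closure = A) :
    (B0 D₀ A Mc N hMdom).IsClosable ∧
    Submodule.span ℂ (⋃ δ ∈ Set.Ioi (0 : ℝ), R δ '' (F : Set K)) ≤ D₀.domain ⊓ A.domain ∧
    ((B0 D₀ A Mc N hMdom).closure.domRestrict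
        (Submodule.span ℂ (⋃ δ ∈ Set.Ioi (0 : ℝ), R δ '' (F : Set K)))).closure
      = (B0 D₀ A Mc N hMdom).closure :=
  stmt4_general D₀ R hRdom hRval hRinv hRtendsto Mc N Mop hMdom hMcomm A hAdense hARdom hARcomm c
    hpos F hF hFcore
end

section
/- Assume B₀ is closable and let B denote its closure. Then for every ε > 0 and every u ∈ dom(B): R_ε u ∈ dom(D₀) ∩ dom(A) and R_ε(Bu) = B₀(R_ε u) + ε·D₀(R_ε(M(R_ε u))) + (R_ε(𝓝u) − 𝓝(R_ε u)). Moreover, as ε → 0⁺, for every w ∈ K: ⟨ε·D₀(R_ε(M(R_ε u))), w⟩ → 0 and ⟨B₀(R_ε u), w⟩ → ⟨Bu, w⟩ (i.e., ε·D₀(R_ε(M(R_ε u))) converges weakly to 0 and B₀(R_ε u) converges weakly to Bu). -/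
open Filter

open Topology

/-!
The resolvent `R_ε = (1 + ε D₀)⁻¹` almost commutes with `B₀`. It commutes with `D₀` and with `A`,
and `[𝓜, D₀] = M` gives `R_ε 𝓜 = 𝓜 R_ε + ε R_ε M R_ε`; together these yield the identity on
`dom B₀`. Apart from `A R_ε u` and `R_ε B₀ u`, every term of that identity is bounded in `u`
(`ε D₀ 𝓜 R_ε = 𝓜 - 𝓜 R_ε - ε M R_ε`), so the closedness of `A` carries it over to the closure of the
graph of `B₀`. The limits then hold even in norm: `ε D₀ R_ε M R_ε u = M R_ε u - R_ε M R_ε u → 0`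
because the `R_ε` are contractions converging strongly to the identity.
-/

theorem Filter.Tendsto.apply_of_norm_le {ι 𝕜 E F : Type*} [NontriviallyNormedField 𝕜]
    [NormedAddCommGroup E] [NormedSpace 𝕜 E] [NormedAddCommGroup F] [NormedSpace 𝕜 F]
    {l : Filter ι} {T : ι → E →L[𝕜] F} {C : ℝ} (hT : ∀ᶠ i in l, ‖T i‖ ≤ C)
    {y : ι → E} {y₀ : E} {z : F} (hTy₀ : Tendsto (fun i => T i y₀) l (𝓝 z))
    (hy : Tendsto y l (𝓝 y₀)) :
    Tendsto (fun i => T i (y i)) l (𝓝 z) := by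
  have hdiff : Tendsto (fun i => T i (y i - y₀)) l (𝓝 0) := by
    refine squeeze_zero_norm' ?_
      (by simpa using (tendsto_iff_norm_sub_tendsto_zero.mp hy).const_mul C)
    filter_upwards [hT] with i hi
    exact (T i).le_of_opNorm_le hi _
  simpa using hdiff.add hTy₀

theorem Filter.Tendsto.dite_of_eventually {ι E : Type*} [TopologicalSpace E] {l : Filter ι}
    {g : ι → E} {a : E} (hg : Tendsto g l (𝓝 a)) {p : ι → Prop} [DecidablePred p]
    (hp : ∀ᶠ i in l, p i) {f : ∀ i, p i → E} (hfg : ∀ i (hi : p i), f i hi = g i) (c : E) :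
    Tendsto (fun i => if hi : p i then f i hi else c) l (𝓝 a) :=
  hg.congr' <| hp.mono fun i hi => by simp only [dif_pos hi, hfg]

theorem LinearPMap.IsClosable.mem_closure_graph {𝕜 E F : Type*} [CommRing 𝕜]
    [AddCommGroup E] [AddCommGroup F] [Module 𝕜 E] [Module 𝕜 F] [TopologicalSpace E]
    [TopologicalSpace F] [ContinuousAdd E] [ContinuousAdd F] [TopologicalSpace 𝕜]
    [ContinuousSMul 𝕜 E] [ContinuousSMul 𝕜 F] {f : E →ₗ.[𝕜] F} (hf : f.IsClosable)
    (u : f.closure.domain) :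
    ((u : E), f.closure u) ∈ _root_.closure (f.graph : Set (E × F)) := by
  have h := f.closure.mem_graph u
  rw [← hf.graph_closure_eq_closure_graph] at h
  exact h

/-- `R = (1 + ε • D)⁻¹`. -/
structure LinearPMap.IsResolvent {𝕜 K : Type*} [NontriviallyNormedField 𝕜]
    [NormedAddCommGroup K] [NormedSpace 𝕜 K] (D : K →ₗ.[𝕜] K) (ε : 𝕜) (R : K →L[𝕜] K) :
    Prop where
  mem_domain : ∀ x, R x ∈ D.domain
  add_smul_apply : ∀ x, R x + ε • D ⟨R x, mem_domain x⟩ = x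
  apply_add_smul : ∀ u : D.domain, R (u + ε • D u) = u

namespace LinearPMap.IsResolvent

variable {𝕜 K : Type*} [NontriviallyNormedField 𝕜] [NormedAddCommGroup K] [NormedSpace 𝕜 K]
  {D : K →ₗ.[𝕜] K} {ε : 𝕜} {R : K →L[𝕜] K}

theorem smul_apply (hR : D.IsResolvent ε R) (x : K) (h : R x ∈ D.domain) :
    ε • D ⟨R x, h⟩ = x - R x :=
  eq_sub_of_add_eq' (hR.add_smul_apply x)

theorem smul_apply_map (hR : D.IsResolvent ε R) (v : D.domain) :
    ε • R (D v) = v - R v := by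
  refine eq_sub_of_add_eq' ?_
  rw [← R.map_smul, ← R.map_add, hR.apply_add_smul]

theorem apply_map (hR : D.IsResolvent ε R) (hε : ε ≠ 0) (v : D.domain) (h : R v ∈ D.domain) :
    R (D v) = D ⟨R v, h⟩ :=
  smul_right_injective K hε <| by simp only [hR.smul_apply_map, hR.smul_apply]

section Commutator

variable {Mc Mop : K →L[𝕜] K} (hMdom : ∀ u ∈ D.domain, Mc u ∈ D.domain)
  (hMcomm : ∀ u : D.domain, Mc (D u) = D ⟨Mc u, hMdom u u.2⟩ + Mop u)
include hMcomm

theorem apply_comp (hR : D.IsResolvent ε R) (x : K) :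
    R (Mc x) = Mc (R x) + ε • R (Mop (R x)) := by
  set v : D.domain := ⟨R x, hR.mem_domain x⟩
  have hx : Mc x = (Mc v + ε • D ⟨Mc v, hMdom v v.2⟩) + ε • Mop v := by
    conv_lhs => rw [← hR.add_smul_apply x]
    rw [Mc.map_add, Mc.map_smul, hMcomm, smul_add, add_assoc]
  rw [hx, R.map_add, R.map_smul, (hR.apply_add_smul ⟨Mc v, hMdom v v.2⟩ :)]

theorem apply_map_comp (hR : D.IsResolvent ε R) (hε : ε ≠ 0) (v : D.domain) :
    R (D ⟨Mc v, hMdom v v.2⟩) = D ⟨Mc (R v), hMdom _ (hR.mem_domain v)⟩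
      + ε • D ⟨R (Mop (R v)), hR.mem_domain _⟩ := by
  have hsplit : (⟨R (Mc v), hR.mem_domain _⟩ : D.domain)
      = ⟨Mc (R v), hMdom _ (hR.mem_domain v)⟩ + ε • ⟨R (Mop (R v)), hR.mem_domain _⟩ :=
    Subtype.ext (hR.apply_comp hMdom hMcomm v)
  rw [hR.apply_map hε _ (hR.mem_domain _), hsplit, D.map_add, D.map_smul]

theorem smul_apply_comp (hR : D.IsResolvent ε R) (x : K) :
    ε • D ⟨Mc (R x), hMdom _ (hR.mem_domain x)⟩ = Mc x - Mc (R x) - ε • Mop (R x) := by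
  have h := congrArg (ε • ·) (hMcomm ⟨R x, hR.mem_domain x⟩)
  simp only [smul_add, ← Mc.map_smul, hR.smul_apply, Mc.map_sub] at h
  rw [h, add_sub_cancel_right]

theorem continuous_apply_comp (hR : D.IsResolvent ε R) (hε : ε ≠ 0) :
    Continuous fun x => D ⟨Mc (R x), hMdom _ (hR.mem_domain x)⟩ := by
  have h : (fun x => D ⟨Mc (R x), hMdom _ (hR.mem_domain x)⟩)
      = fun x => ε⁻¹ • (Mc x - Mc (R x) - ε • Mop (R x)) := by
    funext x
    rw [← hR.smul_apply_comp hMdom hMcomm, inv_smul_smul₀ hε]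
  rw [h]
  fun_prop

end Commutator

theorem continuous_smul_apply_comp (hR : D.IsResolvent ε R) (T : K →L[𝕜] K) :
    Continuous fun x => ε • D ⟨R (T x), hR.mem_domain _⟩ := by
  simp only [hR.smul_apply]
  fun_prop

end LinearPMap.IsResolvent

namespace LinearPMap.IsResolvent

variable {K : Type*} [NormedAddCommGroup K] [InnerProductSpace ℂ K]
  {D₀ A : K →ₗ.[ℂ] K} {Mc N Mop : K →L[ℂ] K} {hMdom : ∀ u ∈ D₀.domain, Mc u ∈ D₀.domain}
  (hMcomm : ∀ u : D₀.domain, Mc (D₀ u) = D₀ ⟨Mc u, hMdom u u.2⟩ + Mop u)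
  {ε : ℂ} {R : K →L[ℂ] K} (hR : D₀.IsResolvent ε R) (hε : ε ≠ 0)
  {hARdom : ∀ u ∈ A.domain, R u ∈ A.domain}
  (hARcomm : ∀ u : A.domain, A ⟨R u, hARdom u u.2⟩ = R (A u))
include hMcomm hR hε hARcomm

theorem mem_graph_of_mem_domain_B0 (v : (B0 D₀ A Mc N hMdom).domain) :
    (R v, R (B0 D₀ A Mc N hMdom v) - (D₀ ⟨Mc (R v), hMdom _ (hR.mem_domain v)⟩
      + ε • D₀ ⟨R (Mop (R v)), hR.mem_domain _⟩ + R (N v))) ∈ A.graph := by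
  obtain ⟨hvD, hvA⟩ := Submodule.mem_inf.mp v.2
  refine (A.image_iff (hARdom v hvA)).mp ?_
  have hB : B0 D₀ A Mc N hMdom v = D₀ ⟨Mc v, hMdom v hvD⟩ + N v + A ⟨v, hvA⟩ := rfl
  rw [hB, R.map_add, R.map_add, hR.apply_map_comp hMdom hMcomm hε ⟨v, hvD⟩,
    ← hARcomm ⟨v, hvA⟩]
  abel

theorem mem_graph_of_mem_closure_graph_B0 (hA : A.IsClosed) {x y : K}
    (hxy : (x, y) ∈ _root_.closure ((B0 D₀ A Mc N hMdom).graph : Set (K × K))) :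
    (R x, R y - (D₀ ⟨Mc (R x), hMdom _ (hR.mem_domain x)⟩
      + ε • D₀ ⟨R (Mop (R x)), hR.mem_domain _⟩ + R (N x))) ∈ A.graph := by
  let F : K × K → K × K := fun p =>
    (R p.1, R p.2 - (D₀ ⟨Mc (R p.1), hMdom _ (hR.mem_domain p.1)⟩
      + ε • D₀ ⟨R (Mop (R p.1)), hR.mem_domain _⟩ + R (N p.1)))
  have hcont : Continuous F :=
    (R.continuous.comp continuous_fst).prodMk <| (R.continuous.comp continuous_snd).sub <|
      (((hR.continuous_apply_comp hMdom hMcomm hε).add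
        (hR.continuous_smul_apply_comp (Mop.comp R))).add
        (R.continuous.comp N.continuous)).comp continuous_fst
  have hmaps : Set.MapsTo F (B0 D₀ A Mc N hMdom).graph A.graph := by
    rintro _ hp
    obtain ⟨v, rfl⟩ := (B0 D₀ A Mc N hMdom).mem_graph_iff'.mp hp
    exact hR.mem_graph_of_mem_domain_B0 hMcomm hε hARcomm v
  exact (IsClosed.closure_eq hA).subset (map_mem_closure (f := F) hcont hxy hmaps)

variable (hA : A.IsClosed) (hB : (B0 D₀ A Mc N hMdom).IsClosable)
include hA hB

theorem mem_domain_B0_of_mem_domain_closure (u : (B0 D₀ A Mc N hMdom).closure.domain) :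
    R u ∈ D₀.domain ⊓ A.domain :=
  Submodule.mem_inf.mpr ⟨hR.mem_domain u, A.mem_domain_of_mem_graph
    (hR.mem_graph_of_mem_closure_graph_B0 hMcomm hε hARcomm hA (hB.mem_closure_graph u))⟩

theorem apply_closure_B0 (u : (B0 D₀ A Mc N hMdom).closure.domain)
    (h : R u ∈ D₀.domain ⊓ A.domain) :
    R ((B0 D₀ A Mc N hMdom).closure u) = B0 D₀ A Mc N hMdom ⟨R u, h⟩
      + ε • D₀ ⟨R (Mop (R u)), hR.mem_domain _⟩ + (R (N u) - N (R u)) := by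
  have hAu := (A.image_iff (Submodule.mem_inf.mp h).2).mpr
    (hR.mem_graph_of_mem_closure_graph_B0 hMcomm hε hARcomm hA (hB.mem_closure_graph u))
  have hB0 : B0 D₀ A Mc N hMdom ⟨R u, h⟩ = D₀ ⟨Mc (R u), hMdom _ (hR.mem_domain u)⟩
      + N (R u) + A ⟨R u, (Submodule.mem_inf.mp h).2⟩ := rfl
  rw [hB0, ← hAu]
  abel

end LinearPMap.IsResolvent

theorem stmt11_general
    {K : Type*} [NormedAddCommGroup K] [InnerProductSpace ℂ K]
    (D₀ : K →ₗ.[ℂ] K)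
    (R : ℝ → K →L[ℂ] K)
    (hRdom : ∀ ε, 0 < ε → ∀ x : K, R ε x ∈ D₀.domain)
    (hRval : ∀ ε (hε : 0 < ε) (x : K),
      D₀ ⟨R ε x, hRdom ε hε x⟩ = ε⁻¹ • (x - R ε x))
    (hRinv : ∀ ε, 0 < ε → ∀ u : D₀.domain, R ε ((u : K) + ε • D₀ u) = u)
    (hRnorm : ∀ ε, 0 < ε → ‖R ε‖ ≤ 1)
    (hRtendsto : ∀ x : K, Tendsto (fun ε => R ε x) (nhdsWithin 0 (Set.Ioi 0)) (nhds x))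
    (Mc N Mop : K →L[ℂ] K)
    (hMdom : ∀ u ∈ D₀.domain, Mc u ∈ D₀.domain)
    (hMcomm : ∀ u : D₀.domain, Mc (D₀ u) = D₀ ⟨Mc u, hMdom u u.2⟩ + Mop u)
    (A : K →ₗ.[ℂ] K) (hAclosed : A.IsClosed)
    (hARdom : ∀ ε, 0 < ε → ∀ u ∈ A.domain, R ε u ∈ A.domain)
    (hARcomm : ∀ ε (hε : 0 < ε) (u : A.domain),
      A ⟨R ε u, hARdom ε hε u u.2⟩ = R ε (A u))
    (hclosable : (B0 D₀ A Mc N hMdom).IsClosable) :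
    ∃ hmem : ∀ (ε : ℝ), 0 < ε → ∀ u : (B0 D₀ A Mc N hMdom).closure.domain,
        R ε (u : K) ∈ D₀.domain ⊓ A.domain,
      (∀ (ε : ℝ) (hε : 0 < ε) (u : (B0 D₀ A Mc N hMdom).closure.domain),
        R ε ((B0 D₀ A Mc N hMdom).closure u)
          = B0 D₀ A Mc N hMdom ⟨R ε (u : K), hmem ε hε u⟩
            + (ε : ℂ) • D₀ ⟨R ε (Mop (R ε (u : K))), hRdom ε hε _⟩
            + (R ε (N (u : K)) - N (R ε (u : K)))) ∧
      (∀ (u : (B0 D₀ A Mc N hMdom).closure.domain) (w : K),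
        Tendsto (fun ε : ℝ => if hε : 0 < ε then
            (inner ℂ ((ε : ℂ) • D₀ ⟨R ε (Mop (R ε (u : K))), hRdom ε hε _⟩) w : ℂ) else 0)
          (nhdsWithin 0 (Set.Ioi 0)) (nhds 0)) ∧
      (∀ (u : (B0 D₀ A Mc N hMdom).closure.domain) (w : K),
        Tendsto (fun ε : ℝ => if hε : 0 < ε then
            (inner ℂ (B0 D₀ A Mc N hMdom ⟨R ε (u : K), hmem ε hε u⟩) w : ℂ) else 0)
          (nhdsWithin 0 (Set.Ioi 0))
          (nhds (inner ℂ ((B0 D₀ A Mc N hMdom).closure u) w))) := by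
  have hR : ∀ ε : ℝ, 0 < ε → D₀.IsResolvent (ε : ℂ) (R ε) := fun ε hε =>
    { mem_domain := hRdom ε hε
      add_smul_apply := fun x => by
        rw [Complex.coe_smul, hRval ε hε x, smul_inv_smul₀ hε.ne', add_sub_cancel]
      apply_add_smul := fun u => by rw [Complex.coe_smul]; exact hRinv ε hε u }
  have hne : ∀ ε : ℝ, 0 < ε → (ε : ℂ) ≠ 0 := fun ε hε => Complex.ofReal_ne_zero.mpr hε.ne'
  have hmem := fun ε hε => (hR ε hε).mem_domain_B0_of_mem_domain_closure hMcomm (hne ε hε)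
    (hARcomm ε hε) hAclosed hclosable
  have hformula := fun ε hε u => (hR ε hε).apply_closure_B0 hMcomm (hne ε hε) (hARcomm ε hε)
    hAclosed hclosable u (hmem ε hε u)
  have hpos : ∀ᶠ ε in 𝓝[>] (0 : ℝ), 0 < ε := eventually_mem_nhdsWithin
  have hcomm_lim (x : K) :
      Tendsto (fun ε => Mop (R ε x) - R ε (Mop (R ε x))) (𝓝[>] 0) (𝓝 0) := by
    have hMR := (Mop.continuous.tendsto x).comp (hRtendsto x)
    simpa using hMR.sub ((hRtendsto _).apply_of_norm_le (hpos.mono hRnorm) hMR)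
  refine ⟨hmem, hformula, fun u w => ?_, fun u w => ?_⟩
  · have hlim := (hcomm_lim u).inner (𝕜 := ℂ) (tendsto_const_nhds (x := w))
    rw [inner_zero_left] at hlim
    exact hlim.dite_of_eventually hpos (fun ε hε => by rw [(hR ε hε).smul_apply]) 0
  · have hN : Tendsto (fun ε => R ε (N u) - N (R ε u)) (𝓝[>] 0) (𝓝 0) := by
      simpa using (hRtendsto (N u)).sub ((N.continuous.tendsto u).comp (hRtendsto u))
    have hBu := hRtendsto ((B0 D₀ A Mc N hMdom).closure u)
    have hlim := ((hBu.sub (hcomm_lim u)).sub hN).inner (𝕜 := ℂ) (tendsto_const_nhds (x := w))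
    rw [sub_zero, sub_zero] at hlim
    refine hlim.dite_of_eventually hpos (fun ε hε => ?_) 0
    rw [hformula ε hε u, (hR ε hε).smul_apply]
    congr 1
    abel

theorem stmt11
    {K : Type*} [NormedAddCommGroup K] [InnerProductSpace ℂ K] [CompleteSpace K]
    (D₀ : K →ₗ.[ℂ] K) (hD₀dense : Dense (D₀.domain : Set K)) (hD₀closed : D₀.IsClosed)
    (R : ℝ → K →L[ℂ] K)
    (hRdom : ∀ ε, 0 < ε → ∀ x : K, R ε x ∈ D₀.domain)
    (hRval : ∀ ε (hε : 0 < ε) (x : K),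
      D₀ ⟨R ε x, hRdom ε hε x⟩ = ε⁻¹ • (x - R ε x))
    (hRinv : ∀ ε, 0 < ε → ∀ u : D₀.domain, R ε ((u : K) + ε • D₀ u) = u)
    (hRnorm : ∀ ε, 0 < ε → ‖R ε‖ ≤ 1)
    (hRtendsto : ∀ x : K, Tendsto (fun ε => R ε x) (nhdsWithin 0 (Set.Ioi 0)) (nhds x))
    (hRadjdom : ∀ ε, 0 < ε → ∀ x : K,
      ContinuousLinearMap.adjoint (R ε) x ∈ D₀.adjoint.domain)
    (hRadjval : ∀ ε (hε : 0 < ε) (x : K),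
      D₀.adjoint ⟨ContinuousLinearMap.adjoint (R ε) x, hRadjdom ε hε x⟩
        = ε⁻¹ • (x - ContinuousLinearMap.adjoint (R ε) x))
    (hRadjtendsto : ∀ x : K,
      Tendsto (fun ε => ContinuousLinearMap.adjoint (R ε) x) (nhdsWithin 0 (Set.Ioi 0)) (nhds x))
    (Mc N Mop : K →L[ℂ] K)
    (hMdom : ∀ u ∈ D₀.domain, Mc u ∈ D₀.domain)
    (hMcomm : ∀ u : D₀.domain, Mc (D₀ u) = D₀ ⟨Mc u, hMdom u u.2⟩ + Mop u)
    (A : K →ₗ.[ℂ] K) (hAdense : Dense (A.domain : Set K)) (hAclosed : A.IsClosed)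
    (hARdom : ∀ ε, 0 < ε → ∀ u ∈ A.domain, R ε u ∈ A.domain)
    (hARcomm : ∀ ε (hε : 0 < ε) (u : A.domain),
      A ⟨R ε u, hARdom ε hε u u.2⟩ = R ε (A u))
    (hclosable : (B0 D₀ A Mc N hMdom).IsClosable) :
    ∃ hmem : ∀ (ε : ℝ), 0 < ε → ∀ u : (B0 D₀ A Mc N hMdom).closure.domain,
        R ε (u : K) ∈ D₀.domain ⊓ A.domain,
      (∀ (ε : ℝ) (hε : 0 < ε) (u : (B0 D₀ A Mc N hMdom).closure.domain),
        R ε ((B0 D₀ A Mc N hMdom).closure u)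
          = B0 D₀ A Mc N hMdom ⟨R ε (u : K), hmem ε hε u⟩
            + (ε : ℂ) • D₀ ⟨R ε (Mop (R ε (u : K))), hRdom ε hε _⟩
            + (R ε (N (u : K)) - N (R ε (u : K)))) ∧
      (∀ (u : (B0 D₀ A Mc N hMdom).closure.domain) (w : K),
        Tendsto (fun ε : ℝ => if hε : 0 < ε then
            (inner ℂ ((ε : ℂ) • D₀ ⟨R ε (Mop (R ε (u : K))), hRdom ε hε _⟩) w : ℂ) else 0)
          (nhdsWithin 0 (Set.Ioi 0)) (nhds 0)) ∧
      (∀ (u : (B0 D₀ A Mc N hMdom).closure.domain) (w : K),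
        Tendsto (fun ε : ℝ => if hε : 0 < ε then
            (inner ℂ (B0 D₀ A Mc N hMdom ⟨R ε (u : K), hmem ε hε u⟩) w : ℂ) else 0)
          (nhdsWithin 0 (Set.Ioi 0))
          (nhds (inner ℂ ((B0 D₀ A Mc N hMdom).closure u) w))) :=
  stmt11_general D₀ R hRdom hRval hRinv hRnorm hRtendsto Mc N Mop hMdom hMcomm A hAclosed hARdom
    hARcomm hclosable
end

section
/- Let B₀* denote the adjoint of the densely defined operator B₀. For every ε > 0, let C_ε denote the bounded linear operator on K given by C_ε x = ε·D₀(R_ε(M(R_ε x))) and let N_ε := R_ε∘𝓝 − 𝓝∘R_ε. Then for every f ∈ dom(B₀*): R_ε^* f ∈ dom(B₀*) ∩ dom(D₀*) ∩ dom(A*), and both identities hold: B₀*(R_ε^* f) = R_ε^*(B₀* f) + C_ε^* f + N_ε^* f, and B₀*(R_ε^* f) = 𝓜*(D₀*(R_ε^* f)) + 𝓝*(R_ε^* f) + A*(R_ε^* f). -/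
open Filter

local notation "⟪" x ", " y "⟫" => @inner ℂ _ _ x y

theorem stmt14
    {K : Type*} [NormedAddCommGroup K] [InnerProductSpace ℂ K] [CompleteSpace K]
    (D₀ : K →ₗ.[ℂ] K) (hD₀dense : Dense (D₀.domain : Set K)) (hD₀closed : D₀.IsClosed)
    (R : ℝ → K →L[ℂ] K)
    (hRdom : ∀ ε, 0 < ε → ∀ x : K, R ε x ∈ D₀.domain)
    (hRval : ∀ ε (hε : 0 < ε) (x : K),
      D₀ ⟨R ε x, hRdom ε hε x⟩ = ε⁻¹ • (x - R ε x))
    (hRinv : ∀ ε, 0 < ε → ∀ u : D₀.domain, R ε ((u : K) + ε • D₀ u) = u)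
    (hRnorm : ∀ ε, 0 < ε → ‖R ε‖ ≤ 1)
    (hRtendsto : ∀ x : K, Tendsto (fun ε => R ε x) (nhdsWithin 0 (Set.Ioi 0)) (nhds x))
    (hRadjdom : ∀ ε, 0 < ε → ∀ x : K,
      ContinuousLinearMap.adjoint (R ε) x ∈ D₀.adjoint.domain)
    (hRadjval : ∀ ε (hε : 0 < ε) (x : K),
      D₀.adjoint ⟨ContinuousLinearMap.adjoint (R ε) x, hRadjdom ε hε x⟩
        = ε⁻¹ • (x - ContinuousLinearMap.adjoint (R ε) x))
    (hRadjtendsto : ∀ x : K,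
      Tendsto (fun ε => ContinuousLinearMap.adjoint (R ε) x) (nhdsWithin 0 (Set.Ioi 0)) (nhds x))
    (Mc N Mop : K →L[ℂ] K)
    (hMdom : ∀ u ∈ D₀.domain, Mc u ∈ D₀.domain)
    (hMcomm : ∀ u : D₀.domain, Mc (D₀ u) = D₀ ⟨Mc u, hMdom u u.2⟩ + Mop u)
    (A : K →ₗ.[ℂ] K) (hAdense : Dense (A.domain : Set K)) (hAclosed : A.IsClosed)
    (hARdom : ∀ ε, 0 < ε → ∀ u ∈ A.domain, R ε u ∈ A.domain)
    (hARcomm : ∀ ε (hε : 0 < ε) (u : A.domain),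
      A ⟨R ε u, hARdom ε hε u u.2⟩ = R ε (A u))
    (hB0dense : Dense ((D₀.domain ⊓ A.domain : Submodule ℂ K) : Set K))
    -- the bounded commutator operators `C_ε`
    (Cop : ℝ → K →L[ℂ] K)
    (hC : ∀ (ε : ℝ) (hε : 0 < ε) (x : K),
      Cop ε x = (ε : ℂ) • D₀ ⟨R ε (Mop (R ε x)), hRdom ε hε _⟩) :
    ∀ (ε : ℝ) (hε : 0 < ε) (f : K) (hf : f ∈ (B0 D₀ A Mc N hMdom).adjoint.domain),
      ∃ (h1 : ContinuousLinearMap.adjoint (R ε) f ∈ (B0 D₀ A Mc N hMdom).adjoint.domain)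
        (h2 : ContinuousLinearMap.adjoint (R ε) f ∈ D₀.adjoint.domain)
        (h3 : ContinuousLinearMap.adjoint (R ε) f ∈ A.adjoint.domain),
        (B0 D₀ A Mc N hMdom).adjoint ⟨ContinuousLinearMap.adjoint (R ε) f, h1⟩
          = ContinuousLinearMap.adjoint (R ε) ((B0 D₀ A Mc N hMdom).adjoint ⟨f, hf⟩)
            + ContinuousLinearMap.adjoint (Cop ε) f
            + ContinuousLinearMap.adjoint ((R ε).comp N - N.comp (R ε)) f ∧
        (B0 D₀ A Mc N hMdom).adjoint ⟨ContinuousLinearMap.adjoint (R ε) f, h1⟩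
          = ContinuousLinearMap.adjoint Mc
              (D₀.adjoint ⟨ContinuousLinearMap.adjoint (R ε) f, h2⟩)
            + ContinuousLinearMap.adjoint N (ContinuousLinearMap.adjoint (R ε) f)
            + A.adjoint ⟨ContinuousLinearMap.adjoint (R ε) f, h3⟩ := by
  intro ε hε f hf
  set B := B0 D₀ A Mc N hMdom with hB
  have hB0mem : ∀ δ, 0 < δ → ∀ u : B.domain, R δ (u : K) ∈ B.domain := fun δ hδ u =>
    Submodule.mem_inf.mpr
      ⟨hRdom δ hδ u, hARdom δ hδ u (Submodule.mem_inf.mp u.2).2⟩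
  have hB0app : ∀ u : B.domain,
      B u = D₀ ⟨Mc u, hMdom _ (Submodule.mem_inf.mp u.2).1⟩ + N u
        + A ⟨u, (Submodule.mem_inf.mp u.2).2⟩ := fun u => rfl
  -- L1 : `R δ` commutes with `D₀`
  have L1 : ∀ δ (hδ : 0 < δ) (w : D₀.domain),
      R δ (D₀ w) = D₀ ⟨R δ (w : K), hRdom δ hδ w⟩ := by
    intro δ hδ w
    have h : R δ ((w : K) + δ • (D₀ w : K)) = (w : K) := hRinv δ hδ w
    rw [map_add, ContinuousLinearMap.map_smul_of_tower] at h
    have h2 : δ • R δ (D₀ w) = (w : K) - R δ (w : K) := by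
      rw [eq_sub_iff_add_eq']; exact h
    calc R δ (D₀ w) = δ⁻¹ • (δ • R δ (D₀ w)) := (inv_smul_smul₀ hδ.ne' _).symm
      _ = δ⁻¹ • ((w : K) - R δ (w : K)) := by rw [h2]
      _ = D₀ ⟨R δ (w : K), hRdom δ hδ w⟩ := (hRval δ hδ w).symm
  -- L2 : commutator of `Mc` with `R δ`
  have L2 : ∀ δ (hδ : 0 < δ) (x : K),
      R δ (Mc x) = Mc (R δ x) + δ • R δ (Mop (R δ x)) := by
    intro δ hδ x
    have hu : R δ x ∈ D₀.domain := hRdom δ hδ x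
    have hMu : Mc (R δ x) ∈ D₀.domain := hMdom _ hu
    have hD : (D₀ ⟨Mc (R δ x), hMu⟩ : K) = Mc (D₀ ⟨R δ x, hu⟩) - Mop (R δ x) := by
      have := hMcomm ⟨R δ x, hu⟩
      rw [this]; abel
    have hx : R δ x + δ • (D₀ ⟨R δ x, hu⟩ : K) = x := by
      rw [hRval δ hδ x, smul_inv_smul₀ hδ.ne']; abel
    have h : R δ (Mc (R δ x) + δ • (D₀ ⟨Mc (R δ x), hMu⟩ : K)) = Mc (R δ x) :=
      hRinv δ hδ ⟨Mc (R δ x), hMu⟩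
    have hMcx : Mc (R δ x) + Mc (δ • (D₀ ⟨R δ x, hu⟩ : K)) = Mc x := by
      rw [← map_add, hx]
    have harg : Mc (R δ x) + δ • (D₀ ⟨Mc (R δ x), hMu⟩ : K)
        = Mc x - δ • Mop (R δ x) := by
      rw [hD, smul_sub, ← ContinuousLinearMap.map_smul_of_tower, ← hMcx]
      abel
    rw [harg, map_sub, ContinuousLinearMap.map_smul_of_tower] at h
    rw [← h]; abel
  -- L4 : commutator of `R δ` with `B`
  have L4 : ∀ δ (hδ : 0 < δ) (u : B.domain),
      R δ (B u) = B ⟨R δ (u : K), hB0mem δ hδ u⟩ + Cop δ (u : K)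
        + ((R δ).comp N - N.comp (R δ)) (u : K) := by
    intro δ hδ u
    obtain ⟨hu1, hu2⟩ := Submodule.mem_inf.mp u.2
    have key : R δ (D₀ ⟨Mc (u : K), hMdom _ hu1⟩)
        = D₀ ⟨Mc (R δ (u : K)), hMdom _ (hRdom δ hδ _)⟩ + Cop δ (u : K) := by
      have e1 : R δ (D₀ ⟨Mc (u : K), hMdom _ hu1⟩)
          = D₀ ⟨R δ (Mc (u : K)), hRdom δ hδ _⟩ := L1 δ hδ ⟨Mc (u : K), hMdom _ hu1⟩
      have hsum : (⟨R δ (Mc (u : K)), hRdom δ hδ _⟩ : D₀.domain)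
          = ⟨Mc (R δ (u : K)), hMdom _ (hRdom δ hδ _)⟩
            + (δ : ℂ) • ⟨R δ (Mop (R δ (u : K))), hRdom δ hδ _⟩ := by
        apply Subtype.ext
        show R δ (Mc (u : K)) = Mc (R δ (u : K)) + (δ : ℂ) • R δ (Mop (R δ (u : K)))
        exact L2 δ hδ (u : K)
      rw [e1, hsum, D₀.map_add, D₀.map_smul, hC δ hδ (u : K)]
    have eA : R δ (A ⟨(u : K), hu2⟩) = A ⟨R δ (u : K), hARdom δ hδ _ hu2⟩ :=
      (hARcomm δ hδ ⟨(u : K), hu2⟩).symm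
    rw [hB0app u, hB0app ⟨R δ (u : K), hB0mem δ hδ u⟩]
    rw [map_add, map_add, key, eA]
    show _ = D₀ ⟨Mc (R δ (u : K)), hMdom _ (hRdom δ hδ _)⟩ + N (R δ (u : K))
        + A ⟨R δ (u : K), hARdom δ hδ _ hu2⟩ + Cop δ (u : K)
        + (R δ (N (u : K)) - N (R δ (u : K)))
    abel
  -- the adjoint element
  set g := ContinuousLinearMap.adjoint (R ε) f with hg
  set w₁ := ContinuousLinearMap.adjoint (R ε) (B.adjoint ⟨f, hf⟩)
      + ContinuousLinearMap.adjoint (Cop ε) f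
      + ContinuousLinearMap.adjoint ((R ε).comp N - N.comp (R ε)) f with hw₁def
  have hBdense : Dense (B.domain : Set K) := hB0dense
  have hw₁ : ∀ u : B.domain, ⟪w₁, (u : K)⟫ = ⟪g, B u⟫ := by
    intro u
    calc ⟪w₁, (u : K)⟫
        = ⟪B.adjoint ⟨f, hf⟩, R ε (u : K)⟫ + ⟪f, Cop ε (u : K)⟫
          + ⟪f, ((R ε).comp N - N.comp (R ε)) (u : K)⟫ := by
          rw [hw₁def, inner_add_left, inner_add_left,
            ContinuousLinearMap.adjoint_inner_left, ContinuousLinearMap.adjoint_inner_left,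
            ContinuousLinearMap.adjoint_inner_left]
      _ = ⟪f, B ⟨R ε (u : K), hB0mem ε hε u⟩⟫ + ⟪f, Cop ε (u : K)⟫
          + ⟪f, ((R ε).comp N - N.comp (R ε)) (u : K)⟫ := by
          rw [LinearPMap.adjoint_isFormalAdjoint hBdense ⟨f, hf⟩ ⟨R ε (u : K), hB0mem ε hε u⟩]
      _ = ⟪f, B ⟨R ε (u : K), hB0mem ε hε u⟩ + Cop ε (u : K)
            + ((R ε).comp N - N.comp (R ε)) (u : K)⟫ := by
          rw [inner_add_right, inner_add_right]
      _ = ⟪f, R ε (B u)⟫ := by rw [← L4 ε hε u]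
      _ = ⟪g, B u⟫ := (ContinuousLinearMap.adjoint_inner_left _ _ _).symm
  have h1 : g ∈ B.adjoint.domain :=
    LinearPMap.mem_adjoint_domain_of_exists _ ⟨w₁, hw₁⟩
  have eq1 : B.adjoint ⟨g, h1⟩ = w₁ := LinearPMap.adjoint_apply_eq hBdense ⟨g, h1⟩ hw₁
  have h2 : g ∈ D₀.adjoint.domain := hRadjdom ε hε f
  -- step D
  set b := B.adjoint ⟨g, h1⟩ with hbdef
  set d := D₀.adjoint ⟨g, h2⟩ with hddef
  set w₂ := b - ContinuousLinearMap.adjoint Mc d - ContinuousLinearMap.adjoint N g with hw₂def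
  have hw₂ : ∀ u : A.domain, ⟪w₂, (u : K)⟫ = ⟪g, A u⟫ := by
    intro u
    have key : ∀ δ, 0 < δ →
        ⟪w₂, R δ (u : K)⟫ = ⟪ContinuousLinearMap.adjoint (R δ) g, A u⟫ := by
      intro δ hδ
      have hmem : R δ (u : K) ∈ B.domain :=
        Submodule.mem_inf.mpr ⟨hRdom δ hδ (u : K), hARdom δ hδ (u : K) u.2⟩
      have hMcm : Mc (R δ (u : K)) ∈ D₀.domain := hMdom _ (hRdom δ hδ (u : K))
      calc ⟪w₂, R δ (u : K)⟫
          = ⟪b, R δ (u : K)⟫ - ⟪d, Mc (R δ (u : K))⟫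
            - ⟪ContinuousLinearMap.adjoint N g, R δ (u : K)⟫ := by
            rw [hw₂def, inner_sub_left, inner_sub_left,
              ContinuousLinearMap.adjoint_inner_left]
        _ = ⟪g, B ⟨R δ (u : K), hmem⟩⟫ - ⟪g, D₀ ⟨Mc (R δ (u : K)), hMcm⟩⟫
            - ⟪g, N (R δ (u : K))⟫ := by
            have e1 : ⟪b, R δ (u : K)⟫ = ⟪g, B ⟨R δ (u : K), hmem⟩⟫ :=
              LinearPMap.adjoint_isFormalAdjoint hBdense ⟨g, h1⟩ ⟨R δ (u : K), hmem⟩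
            have e2 : ⟪d, Mc (R δ (u : K))⟫ = ⟪g, D₀ ⟨Mc (R δ (u : K)), hMcm⟩⟫ :=
              LinearPMap.adjoint_isFormalAdjoint hD₀dense ⟨g, h2⟩ ⟨Mc (R δ (u : K)), hMcm⟩
            have e3 : ⟪ContinuousLinearMap.adjoint N g, R δ (u : K)⟫ = ⟪g, N (R δ (u : K))⟫ :=
              ContinuousLinearMap.adjoint_inner_left N (R δ (u : K)) g
            rw [e1, e2, e3]
        _ = ⟪g, A ⟨R δ (u : K), hARdom δ hδ (u : K) u.2⟩⟫ := by
            rw [← inner_sub_right, ← inner_sub_right]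
            congr 1
            rw [hB0app ⟨R δ (u : K), hmem⟩]
            show D₀ ⟨Mc (R δ (u : K)), hMcm⟩ + N (R δ (u : K))
                + A ⟨R δ (u : K), hARdom δ hδ (u : K) u.2⟩
                - D₀ ⟨Mc (R δ (u : K)), hMcm⟩ - N (R δ (u : K)) = _
            abel
        _ = ⟪g, R δ (A u)⟫ := by rw [hARcomm δ hδ u]
        _ = ⟪ContinuousLinearMap.adjoint (R δ) g, A u⟫ :=
            (ContinuousLinearMap.adjoint_inner_left _ _ _).symm
    have t1 : Tendsto (fun δ => ⟪w₂, R δ (u : K)⟫) (nhdsWithin 0 (Set.Ioi 0))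
        (nhds ⟪w₂, (u : K)⟫) := tendsto_const_nhds.inner (hRtendsto (u : K))
    have t2 : Tendsto (fun δ => ⟪ContinuousLinearMap.adjoint (R δ) g, A u⟫)
        (nhdsWithin 0 (Set.Ioi 0)) (nhds ⟪g, A u⟫) :=
      (hRadjtendsto g).inner tendsto_const_nhds
    have heq : (fun δ => ⟪w₂, R δ (u : K)⟫)
        =ᶠ[nhdsWithin 0 (Set.Ioi 0)] fun δ => ⟪ContinuousLinearMap.adjoint (R δ) g, A u⟫ :=
      eventually_of_mem self_mem_nhdsWithin fun δ hδ => key δ hδ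
    exact tendsto_nhds_unique (t1.congr' heq) t2
  have h3 : g ∈ A.adjoint.domain :=
    LinearPMap.mem_adjoint_domain_of_exists _ ⟨w₂, hw₂⟩
  have eqA : A.adjoint ⟨g, h3⟩ = w₂ := LinearPMap.adjoint_apply_eq hAdense ⟨g, h3⟩ hw₂
  refine ⟨h1, h2, h3, eq1, ?_⟩
  rw [eqA, hw₂def, ← hddef, ← hbdef]
  abel
end
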